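/- arXiv:2201.04758 — 9 statements merged into one kernel-verified Lean document; each statement's English description precedes it below -/
import Mathlib

section
/- Let F : ℝ → ℂ be twice continuously differentiable with F′(0) = 0. Then for every λ > 0 and all x, y ∈ ℝ one has F(λ|x−y|) = F(λ|x|) − λ·y·sgn(x)·F′(λ|x|) + λ²·y²·∫₀¹ (1−θ)·F″(λ|x−θy|) dθ. -/
/-!
Since `F'(0) = 0`, the even function `G u = F (λ|u|)` is twice differentiable on all of `ℝ`, kink
at `0` included: `G' u = sgn u • λ F'(λ|u|)` vanishes at `0`, and this odd extension of
`t ↦ λ F'(λ t)` has derivative `λ² F''(λ|u|)`, which is continuous. The claimed identity is then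
Taylor's formula with integral remainder for `G` on the segment from `x` to `x - y`.
-/

open Filter Topology Set Asymptotics

theorem Real.sign_mul_abs (r : ℝ) : Real.sign r * |r| = r := by
  rcases lt_trichotomy r 0 with hr | rfl | hr
  · simp [Real.sign_of_neg hr, abs_of_neg hr]
  · simp
  · simp [Real.sign_of_pos hr, abs_of_pos hr]

section

variable {E : Type*} [NormedAddCommGroup E] [NormedSpace ℝ E]

theorem HasDerivAt.isLittleO_comp_abs {φ : ℝ → E} {φ' : E} (h : HasDerivAt φ φ' 0) :
    (fun v : ℝ ↦ φ |v| - φ 0 - |v| • φ') =o[𝓝 0] fun v ↦ v := by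
  have habs : Tendsto (fun v : ℝ ↦ |v|) (𝓝 0) (𝓝 0) := by
    simpa using continuous_abs.tendsto (0 : ℝ)
  have := (hasDerivAt_iff_isLittleO.1 h).comp_tendsto habs
  simp only [sub_zero] at this
  exact this.trans_isBigO (isBigO_of_le _ fun v ↦ by simp)

theorem hasDerivAt_comp_abs {φ : ℝ → E} {φ' : E} {u : ℝ} (h : HasDerivAt φ φ' |u|)
    (h0 : u = 0 → φ' = 0) : HasDerivAt (fun v ↦ φ |v|) (Real.sign u • φ') u := by
  rcases lt_trichotomy u 0 with hu | rfl | hu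
  · simpa [Real.sign_of_neg hu, Function.comp_def] using h.scomp u (hasDerivAt_abs_neg hu)
  · rw [abs_zero, h0 rfl] at h
    rw [hasDerivAt_iff_isLittleO]
    simpa using h.isLittleO_comp_abs
  · simpa [Real.sign_of_pos hu, Function.comp_def] using h.scomp u (hasDerivAt_abs_pos hu)

theorem hasDerivAt_sign_smul_comp_abs {ψ : ℝ → E} {ψ' : E} {u : ℝ} (h : HasDerivAt ψ ψ' |u|)
    (h0 : ψ 0 = 0) : HasDerivAt (fun v ↦ Real.sign v • ψ |v|) ψ' u := by
  rcases lt_trichotomy u 0 with hu | rfl | hu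
  · have hloc : (fun v ↦ Real.sign v • ψ |v|) =ᶠ[𝓝 u] fun v ↦ -ψ |v| := by
      filter_upwards [Iio_mem_nhds hu] with v hv
      simp [Real.sign_of_neg (mem_Iio.1 hv)]
    simpa [Function.comp_def] using
      (h.scomp u (hasDerivAt_abs_neg hu)).neg.congr_of_eventuallyEq hloc
  · rw [abs_zero] at h
    have hsign : (fun v : ℝ ↦ Real.sign v) =O[𝓝 0] (fun _ ↦ (1 : ℝ)) :=
      isBigO_of_le _ fun v ↦ by rcases Real.sign_apply_eq v with h | h | h <;> simp [h]
    have hsplit (v : ℝ) : Real.sign v • ψ |v| - v • ψ' =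
        Real.sign v • (ψ |v| - ψ 0 - |v| • ψ') := by
      rw [h0, smul_sub, smul_smul, Real.sign_mul_abs, sub_zero]
    rw [hasDerivAt_iff_isLittleO]
    simpa [h0, hsplit] using hsign.smul_isLittleO h.isLittleO_comp_abs
  · have hloc : (fun v ↦ Real.sign v • ψ |v|) =ᶠ[𝓝 u] fun v ↦ ψ |v| := by
      filter_upwards [Ioi_mem_nhds hu] with v hv
      simp [Real.sign_of_pos (mem_Ioi.1 hv)]
    simpa [Function.comp_def] using
      (h.scomp u (hasDerivAt_abs_pos hu)).congr_of_eventuallyEq hloc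

variable [CompleteSpace E] {g g' g'' : ℝ → E}

theorem taylor_two_integral_remainder_zero_one (hg : ∀ t, HasDerivAt g (g' t) t)
    (hg' : ∀ t, HasDerivAt g' (g'' t) t) (hg'' : Continuous g'') :
    g 1 = g 0 + g' 0 + ∫ t in (0 : ℝ)..1, (1 - t) • g'' t := by
  have hg'c : Continuous g' := continuous_iff_continuousAt.2 fun t ↦ (hg' t).continuousAt
  have hparts := intervalIntegral.integral_smul_deriv_eq_deriv_smul (a := 0) (b := 1)
    (u := fun t : ℝ ↦ 1 - t) (u' := fun _ ↦ -1) (v := g') (v' := g'')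
    (fun t _ ↦ (hasDerivAt_id t).const_sub 1) (fun t _ ↦ hg' t)
    intervalIntegrable_const (hg''.intervalIntegrable 0 1)
  have hftc : ∫ t in (0 : ℝ)..1, g' t = g 1 - g 0 :=
    intervalIntegral.integral_eq_sub_of_hasDerivAt (fun t _ ↦ hg t) (hg'c.intervalIntegrable 0 1)
  simp only [neg_one_smul, intervalIntegral.integral_neg, hftc] at hparts
  rw [hparts]
  simp only [sub_self, zero_smul, sub_zero, one_smul]
  abel

theorem taylor_two_integral_remainder (hg : ∀ t, HasDerivAt g (g' t) t)
    (hg' : ∀ t, HasDerivAt g' (g'' t) t) (hg'' : Continuous g'') (x h : ℝ) :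
    g (x + h) = g x + h • g' x + h ^ 2 • ∫ θ in (0 : ℝ)..1, (1 - θ) • g'' (x + θ * h) := by
  have hline : ∀ θ, HasDerivAt (fun θ : ℝ ↦ x + θ * h) h θ := fun θ ↦ by
    simpa using ((hasDerivAt_id θ).mul_const h).const_add x
  have := taylor_two_integral_remainder_zero_one (g := fun θ ↦ g (x + θ * h))
    (g' := fun θ ↦ h • g' (x + θ * h)) (g'' := fun θ ↦ h • h • g'' (x + θ * h))
    (fun θ ↦ (hg _).scomp θ (hline θ)) (fun θ ↦ ((hg' _).scomp θ (hline θ)).const_smul h)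
    (continuous_const.smul (continuous_const.smul (hg''.comp (by fun_prop))))
  simpa [smul_smul, ← intervalIntegral.integral_smul, sq, mul_comm, mul_left_comm] using this

end

theorem stmt1_general (F : ℝ → ℂ) (hF : ContDiff ℝ 2 F) (hF'0 : deriv F 0 = 0)
    (l : ℝ) (x y : ℝ) :
    F (l * |x - y|) = F (l * |x|)
      - (l : ℂ) * (y : ℂ) * (Real.sign x : ℂ) * deriv F (l * |x|)
      + (l : ℂ) ^ 2 * (y : ℂ) ^ 2 *
        ∫ θ in (0:ℝ)..1, ((1 - θ : ℝ) : ℂ) * deriv (deriv F) (l * |x - θ * y|) := by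
  have hF' : ContDiff ℝ 1 (deriv F) := hF.deriv'
  have hdilate {f : ℝ → ℂ} (hf : Differentiable ℝ f) (t : ℝ) :
      HasDerivAt (fun t ↦ f (l * t)) (l • deriv f (l * t)) t :=
    (hf _).hasDerivAt.scomp t ((hasDerivAt_id t).const_mul l |>.congr_deriv (mul_one l))
  have hG : ∀ u, HasDerivAt (fun u ↦ F (l * |u|)) (Real.sign u • l • deriv F (l * |u|)) u :=
    fun u ↦ hasDerivAt_comp_abs (hdilate (hF.differentiable two_ne_zero) _)
      fun hu ↦ by simp [hu, hF'0]
  have hG' : ∀ u, HasDerivAt (fun u ↦ Real.sign u • l • deriv F (l * |u|))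
      (l • l • deriv (deriv F) (l * |u|)) u :=
    fun u ↦ hasDerivAt_sign_smul_comp_abs
      ((hdilate (hF'.differentiable one_ne_zero) _).const_smul l) (by simp [hF'0])
  have hG'' : Continuous fun u : ℝ ↦ l • l • deriv (deriv F) (l * |u|) := by
    have := hF'.continuous_deriv le_rfl
    fun_prop
  have htaylor := taylor_two_integral_remainder hG hG' hG'' x (-y)
  have hremainder : ∫ θ in (0 : ℝ)..1, (1 - θ) • l • l • deriv (deriv F) (l * |x + θ * -y|) =
      (l : ℂ) ^ 2 * ∫ θ in (0 : ℝ)..1, ((1 - θ : ℝ) : ℂ) * deriv (deriv F) (l * |x - θ * y|) := by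
    rw [← intervalIntegral.integral_const_mul]
    congr 1 with θ
    simp only [mul_neg, ← sub_eq_add_neg, Complex.real_smul]
    push_cast
    ring
  rw [sub_eq_add_neg x y, htaylor, hremainder]
  simp only [Complex.real_smul]
  push_cast
  ring

/-- Lemma 3.4 (ii): second-order Taylor-type expansion of `F (λ|x-y|)` when `F'(0) = 0`. -/
theorem stmt1 (F : ℝ → ℂ) (hF : ContDiff ℝ 2 F) (hF'0 : deriv F 0 = 0)
    (l : ℝ) (hl : 0 < l) (x y : ℝ) :
    F (l * |x - y|) = F (l * |x|)
      - (l : ℂ) * (y : ℂ) * (Real.sign x : ℂ) * deriv F (l * |x|)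
      + (l : ℂ) ^ 2 * (y : ℂ) ^ 2 *
        ∫ θ in (0:ℝ)..1, ((1 - θ : ℝ) : ℂ) * deriv (deriv F) (l * |x - θ * y|) :=
  stmt1_general F hF hF'0 l x y
end

section
/- Let F : ℝ → ℂ be three times continuously differentiable with F′(0) = 0 and F″(0) = 0. Then for every λ > 0 and all x, y ∈ ℝ one has F(λ|x−y|) = F(λ|x|) − λ·y·sgn(x)·F′(λ|x|) + (λ²y²/2)·F″(λ|x|) − (λ³y³/2)·∫₀¹ (1−θ)²·sgn(x−θy)·F‴(λ|x−θy|) dθ. -/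
/-!
Write `G t = F (λ|t|)`. Since `F′(0) = 0`, the even function `G` is differentiable at `0`
too, with `G′ t = λ sgn t F′(λ|t|)`; this is odd and vanishes at `0`, hence differentiable
everywhere with `G″ t = λ² F″(λ|t|)`, and `G″` is differentiable off `0` with derivative
`λ³ sgn t F‴(λ|t|)`. The formula is then Taylor's formula of order two with integral remainder
for `G` along the segment from `x` to `x - y`, which only needs `G″` to be differentiable off a
countable set: the fundamental theorem of calculus applies to
`θ ↦ G(p) + (1 - θ) h G′(p) + (1 - θ)² h²/2 G″(p)`, `p = x + θ h`.
-/

open MeasureTheory Set Filter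

variable {E : Type*} [NormedAddCommGroup E] [NormedSpace ℝ E]

lemma hasDerivAt_of_eqOn_Iic_of_eqOn_Ici {g gl gr : ℝ → E} {d : E} {t : ℝ}
    (hl : EqOn g gl (Iic 0)) (hr : EqOn g gr (Ici 0))
    (hdl : t ≤ 0 → HasDerivAt gl d t) (hdr : 0 ≤ t → HasDerivAt gr d t) :
    HasDerivAt g d t := by
  rcases lt_trichotomy t 0 with ht | rfl | ht
  · exact (hdl ht.le).congr_of_eventuallyEq (eventuallyEq_of_mem (Iic_mem_nhds ht) hl)
  · have hwl := (hdl le_rfl).hasDerivWithinAt.congr hl (hl self_mem_Iic)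
    have hwr := (hdr le_rfl).hasDerivWithinAt.congr hr (hr self_mem_Ici)
    simpa [Iic_union_Ici] using hwl.union hwr
  · exact (hdr ht.le).congr_of_eventuallyEq (eventuallyEq_of_mem (Ici_mem_nhds ht) hr)

lemma HasDerivAt.comp_neg {f : ℝ → E} {f' : E} {t : ℝ} (hf : HasDerivAt f f' (-t)) :
    HasDerivAt (fun s => f (-s)) (-f') t := by
  simpa [Function.comp_def] using hf.scomp t (hasDerivAt_neg t)

section abs

variable {f f' : ℝ → E}

lemma hasDerivAt_comp_abs_s2 (hf : ∀ s, HasDerivAt f (f' s) s) {t : ℝ} (h : t ≠ 0 ∨ f' 0 = 0) :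
    HasDerivAt (fun s => f |s|) (Real.sign t • f' |t|) t := by
  refine hasDerivAt_of_eqOn_Iic_of_eqOn_Ici (gl := fun s => f (-s)) (gr := f)
    (fun s hs => by simp [abs_of_nonpos (mem_Iic.1 hs)])
    (fun s hs => by simp [abs_of_nonneg (mem_Ici.1 hs)]) (fun ht => ?_) (fun ht => ?_)
  · refine (hf (-t)).comp_neg.congr_deriv ?_
    rcases ht.lt_or_eq with ht | rfl
    · simp [Real.sign_of_neg ht, abs_of_neg ht]
    · simpa using h
  · refine (hf t).congr_deriv ?_
    rcases ht.lt_or_eq' with ht | rfl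
    · simp [Real.sign_of_pos ht, abs_of_pos ht]
    · simpa using h

lemma hasDerivAt_sign_smul_comp_abs_s2 (hf : ∀ s, HasDerivAt f (f' s) s) (h0 : f 0 = 0) (t : ℝ) :
    HasDerivAt (fun s => Real.sign s • f |s|) (f' |t|) t := by
  refine hasDerivAt_of_eqOn_Iic_of_eqOn_Ici (gl := fun s => -f (-s)) (gr := f)
    (fun s hs => ?_) (fun s hs => ?_) (fun ht => ?_) (fun ht => ?_)
  · rcases (mem_Iic.1 hs).lt_or_eq with hs | rfl
    · simp [Real.sign_of_neg hs, abs_of_neg hs]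
    · simp [h0]
  · rcases (mem_Ici.1 hs).lt_or_eq' with hs | rfl
    · simp [Real.sign_of_pos hs, abs_of_pos hs]
    · simp [h0]
  · simpa [abs_of_nonpos ht] using (hf (-t)).comp_neg.fun_neg
  · simpa [abs_of_nonneg ht] using hf t

end abs

lemma Real.measurable_sign : Measurable Real.sign := by
  unfold Real.sign
  exact Measurable.ite (measurableSet_lt measurable_id measurable_const) measurable_const
    (Measurable.ite (measurableSet_lt measurable_const measurable_id) measurable_const
      measurable_const)

lemma intervalIntegrable_sign_comp {p : ℝ → ℝ} (hp : Measurable p) (μ : Measure ℝ)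
    [IsLocallyFiniteMeasure μ] (a b : ℝ) :
    IntervalIntegrable (fun θ => Real.sign (p θ)) μ a b := by
  refine (intervalIntegrable_const (c := (1 : ℝ))).mono_fun
    (Real.measurable_sign.comp hp).aestronglyMeasurable (Eventually.of_forall fun θ => ?_)
  rcases Real.sign_apply_eq (p θ) with h | h | h <;> simp [h]

theorem taylor_integral_two_off_countable [CompleteSpace E] {G G₁ G₂ G₃ : ℝ → E} {s : Set ℝ}
    (hs : s.Countable) (hG : ∀ t, HasDerivAt G (G₁ t) t) (hG₁ : ∀ t, HasDerivAt G₁ (G₂ t) t)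
    (hG₂c : Continuous G₂) (hG₂ : ∀ t ∉ s, HasDerivAt G₂ (G₃ t) t) (x h : ℝ)
    (hint : IntervalIntegrable (fun θ => G₃ (x + θ * h)) volume 0 1) :
    G (x + h) = G x + h • G₁ x + (h ^ 2 / 2) • G₂ x +
      (h ^ 3 / 2) • ∫ θ in (0 : ℝ)..1, (1 - θ) ^ 2 • G₃ (x + θ * h) := by
  rcases eq_or_ne h 0 with rfl | hh
  · simp
  have hp (θ : ℝ) : HasDerivAt (fun θ => x + θ * h) h θ := by
    simpa using ((hasDerivAt_id θ).mul_const h).const_add x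
  have hc₁ (θ : ℝ) : HasDerivAt (fun θ : ℝ => (1 - θ) * h) (-h) θ := by
    simpa using ((hasDerivAt_id θ).const_sub 1).mul_const h
  have hc₂ (θ : ℝ) :
      HasDerivAt (fun θ : ℝ => (1 - θ) ^ 2 / 2 * h ^ 2) (-((1 - θ) * h ^ 2)) θ := by
    refine ((((hasDerivAt_id' θ).const_sub 1).fun_pow 2).div_const 2).mul_const (h ^ 2)
      |>.congr_deriv ?_
    norm_num
    ring
  set H : ℝ → E := fun θ => G (x + θ * h) + ((1 - θ) * h) • G₁ (x + θ * h)
    + ((1 - θ) ^ 2 / 2 * h ^ 2) • G₂ (x + θ * h)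
  have hH (θ : ℝ) (hθ : x + θ * h ∉ s) :
      HasDerivAt H ((h ^ 3 / 2) • (1 - θ) ^ 2 • G₃ (x + θ * h)) θ := by
    refine (((hG _).scomp θ (hp θ)).add ((hc₁ θ).smul ((hG₁ _).scomp θ (hp θ))) |>.add
      ((hc₂ θ).smul ((hG₂ _ hθ).scomp θ (hp θ)))).congr_deriv ?_
    simp only [Function.comp_apply]
    module
  have hHc : Continuous H := by
    have hGc : Continuous G := continuous_iff_continuousAt.2 fun t => (hG t).continuousAt
    have hG₁c : Continuous G₁ := continuous_iff_continuousAt.2 fun t => (hG₁ t).continuousAt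
    fun_prop
  have hinj : Function.Injective fun θ : ℝ => x + θ * h :=
    (add_right_injective x).comp (mul_left_injective₀ hh)
  have hFTC := integral_eq_of_hasDerivAt_off_countable_of_le H _ zero_le_one (hs.preimage hinj)
    hHc.continuousOn (fun θ hθ => hH θ hθ.2)
    ((hint.continuousOn_smul (f := fun θ => (1 - θ) ^ 2) (by fun_prop)).smul (h ^ 3 / 2))
  rw [intervalIntegral.integral_smul] at hFTC
  rw [hFTC]
  simp only [H, one_mul, zero_mul, add_zero]
  module

theorem taylor_comp_abs_of_deriv_zero [CompleteSpace E] {f : ℝ → E} (hf : ContDiff ℝ 3 f)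
    (hf'0 : deriv f 0 = 0) (x h : ℝ) :
    f |x + h| = f |x| + (h * Real.sign x) • deriv f |x| + (h ^ 2 / 2) • iteratedDeriv 2 f |x| +
      (h ^ 3 / 2) • ∫ θ in (0 : ℝ)..1,
        ((1 - θ) ^ 2 * Real.sign (x + θ * h)) • iteratedDeriv 3 f |x + θ * h| := by
  have hd (k : ℕ) (hk : k < 3) (s : ℝ) :
      HasDerivAt (iteratedDeriv k f) (iteratedDeriv (k + 1) f s) s := by
    rw [iteratedDeriv_succ]
    exact (hf.differentiable_iteratedDeriv k (by exact_mod_cast hk) s).hasDerivAt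
  have hd₀ : ∀ s, HasDerivAt f (deriv f s) s := by simpa using hd 0 (by norm_num)
  have hd₁ : ∀ s, HasDerivAt (deriv f) (iteratedDeriv 2 f s) s := by
    simpa [iteratedDeriv_one] using hd 1 (by norm_num)
  have hint : IntervalIntegrable
      (fun θ => Real.sign (x + θ * h) • iteratedDeriv 3 f |x + θ * h|) volume 0 1 :=
    (intervalIntegrable_sign_comp (by fun_prop) volume 0 1).smul_continuousOn
      (((hf.continuous_iteratedDeriv 3 le_rfl).comp (by fun_prop)).continuousOn)
  have := taylor_integral_two_off_countable (countable_singleton 0)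
    (fun t => hasDerivAt_comp_abs_s2 hd₀ (Or.inr hf'0))
    (hasDerivAt_sign_smul_comp_abs_s2 hd₁ hf'0)
    ((hf.continuous_iteratedDeriv 2 (by norm_num)).comp continuous_abs)
    (fun t ht => hasDerivAt_comp_abs_s2 (hd 2 (by norm_num)) (Or.inl ht)) x h hint
  simpa only [smul_smul] using this

theorem stmt2_general (F : ℝ → ℂ) (hF : ContDiff ℝ 3 F)
    (hF'0 : deriv F 0 = 0)
    (l : ℝ) (x y : ℝ) :
    F (l * |x - y|) = F (l * |x|)
      - (l : ℂ) * (y : ℂ) * (Real.sign x : ℂ) * deriv F (l * |x|)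
      + (l : ℂ) ^ 2 * (y : ℂ) ^ 2 / 2 * iteratedDeriv 2 F (l * |x|)
      - (l : ℂ) ^ 3 * (y : ℂ) ^ 3 / 2 *
        ∫ θ in (0:ℝ)..1, (((1 - θ) ^ 2 : ℝ) : ℂ) * (Real.sign (x - θ * y) : ℂ) *
          iteratedDeriv 3 F (l * |x - θ * y|) := by
  have hscale (k : ℕ) (hk : k ≤ 3) :
      iteratedDeriv k (fun s => F (l * s)) = fun s => l ^ k • iteratedDeriv k F (l * s) :=
    iteratedDeriv_comp_const_smul (hF.of_le (by exact_mod_cast hk)) l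
  have hscale₁ := hscale 1 (by norm_num)
  rw [iteratedDeriv_one, iteratedDeriv_one] at hscale₁
  have := taylor_comp_abs_of_deriv_zero (f := fun s => F (l * s)) (hF.comp (by fun_prop))
    (by simp [hscale₁, hF'0]) x (-y)
  simp only [hscale₁, hscale 2 (by norm_num), hscale 3 le_rfl, ← sub_eq_add_neg, neg_mul,
    mul_neg] at this
  have hI : ∫ θ in (0 : ℝ)..1, ((1 - θ) ^ 2 * Real.sign (x - θ * y)) • l ^ 3 •
      iteratedDeriv 3 F (l * |x - θ * y|) = (l : ℂ) ^ 3 * ∫ θ in (0 : ℝ)..1,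
        (((1 - θ) ^ 2 : ℝ) : ℂ) * (Real.sign (x - θ * y) : ℂ) *
          iteratedDeriv 3 F (l * |x - θ * y|) := by
    rw [← intervalIntegral.integral_const_mul]
    congr 1 with θ
    simp only [Complex.real_smul]
    push_cast
    ring
  rw [this, hI]
  simp only [Complex.real_smul]
  push_cast
  ring

/-- Lemma 3.4 (iii): third-order Taylor-type expansion of `F (λ|x-y|)` when
`F'(0) = 0` and `F''(0) = 0`. -/
theorem stmt2 (F : ℝ → ℂ) (hF : ContDiff ℝ 3 F)
    (hF'0 : deriv F 0 = 0) (hF''0 : iteratedDeriv 2 F 0 = 0)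
    (l : ℝ) (hl : 0 < l) (x y : ℝ) :
    F (l * |x - y|) = F (l * |x|)
      - (l : ℂ) * (y : ℂ) * (Real.sign x : ℂ) * deriv F (l * |x|)
      + (l : ℂ) ^ 2 * (y : ℂ) ^ 2 / 2 * iteratedDeriv 2 F (l * |x|)
      - (l : ℂ) ^ 3 * (y : ℂ) ^ 3 / 2 *
        ∫ θ in (0:ℝ)..1, (((1 - θ) ^ 2 : ℝ) : ℂ) * (Real.sign (x - θ * y) : ℂ) *
          iteratedDeriv 3 F (l * |x - θ * y|) :=
  stmt2_general F hF hF'0 l x y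
end

section
/- Fix λ > 0, y ∈ ℝ, and let F denote either F₊(s) = i·e^{is} − e^{−s} or F₋(s) = −i·e^{−is} − e^{−s}. Define u : ℝ → ℂ by u(x) = F(λ|x−y|). Then u is infinitely differentiable on ℝ \ {y}; for every x ≠ y the fourth derivative satisfies u⁗(x) = λ⁴·u(x); and the one-sided limits of the third derivative at y exist and satisfy lim_{x→y⁺} u‴(x) − lim_{x→y⁻} u‴(x) = 4λ³. -/
open MeasureTheory Filter Topology

noncomputable def Gf (c₁ m₁ c₂ m₂ : ℂ) (y : ℝ) : ℝ → ℂ :=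
  fun x => c₁ * Complex.exp (m₁ * ((x : ℂ) - y)) + c₂ * Complex.exp (m₂ * ((x : ℂ) - y))

lemma hasDerivAt_cexp (c m : ℂ) (y : ℝ) (x : ℝ) :
    HasDerivAt (fun t : ℝ => c * Complex.exp (m * ((t : ℂ) - y)))
      (c * m * Complex.exp (m * ((x : ℂ) - y))) x := by
  have h1 : HasDerivAt (fun t : ℝ => m * ((t : ℂ) - y)) m x := by
    simpa using (((Complex.ofRealCLM.hasDerivAt (x := x)).sub_const (y : ℂ)).const_mul m)
  have h2 := (Complex.hasDerivAt_exp (m * ((x : ℂ) - y))).comp x h1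
  simpa [mul_comm, mul_assoc, mul_left_comm] using h2.const_mul c

lemma Gf_contDiff (c₁ m₁ c₂ m₂ : ℂ) (y : ℝ) : ContDiff ℝ (⊤ : ℕ∞) (Gf c₁ m₁ c₂ m₂ y) := by
  have h : ∀ m : ℂ, ContDiff ℝ (⊤ : ℕ∞) fun t : ℝ => Complex.exp (m * ((t : ℂ) - y)) :=
    fun m => Complex.contDiff_exp.comp
      (contDiff_const.mul (Complex.ofRealCLM.contDiff.sub contDiff_const))
  exact (contDiff_const.mul (h m₁)).add (contDiff_const.mul (h m₂))

lemma Gf_iteratedDeriv (c₁ m₁ c₂ m₂ : ℂ) (y : ℝ) (n : ℕ) :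
    iteratedDeriv n (Gf c₁ m₁ c₂ m₂ y) = Gf (c₁ * m₁ ^ n) m₁ (c₂ * m₂ ^ n) m₂ y := by
  induction n with
  | zero => simp [Gf]
  | succ n ih =>
    rw [iteratedDeriv_succ, ih]
    funext x
    have h := ((hasDerivAt_cexp (c₁ * m₁ ^ n) m₁ y x).add
      (hasDerivAt_cexp (c₂ * m₂ ^ n) m₂ y x)).deriv
    unfold Gf
    exact h.trans (by ring)

lemma master (l y : ℝ) (u : ℝ → ℂ) (c₁ m₁ c₂ m₂ d₁ n₁ d₂ n₂ : ℂ)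
    (hup : ∀ x ∈ Set.Ioi y, u x = Gf c₁ m₁ c₂ m₂ y x)
    (hdn : ∀ x ∈ Set.Iio y, u x = Gf d₁ n₁ d₂ n₂ y x)
    (hm₁ : m₁ ^ 4 = (l : ℂ) ^ 4) (hm₂ : m₂ ^ 4 = (l : ℂ) ^ 4)
    (hn₁ : n₁ ^ 4 = (l : ℂ) ^ 4) (hn₂ : n₂ ^ 4 = (l : ℂ) ^ 4)
    (hjump : (c₁ * m₁ ^ 3 + c₂ * m₂ ^ 3) - (d₁ * n₁ ^ 3 + d₂ * n₂ ^ 3) = 4 * (l : ℂ) ^ 3) :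
    ContDiffOn ℝ (⊤ : ℕ∞) u {y}ᶜ ∧
    (∀ x : ℝ, x ≠ y → iteratedDeriv 4 u x = (l : ℂ) ^ 4 * u x) ∧
    (∃ Lp Lm : ℂ,
      Tendsto (iteratedDeriv 3 u) (𝓝[>] y) (𝓝 Lp) ∧
      Tendsto (iteratedDeriv 3 u) (𝓝[<] y) (𝓝 Lm) ∧
      Lp - Lm = 4 * (l : ℂ) ^ 3) := by
  have heu : ∀ x ∈ Set.Ioi y, u =ᶠ[𝓝 x] Gf c₁ m₁ c₂ m₂ y := fun x hx =>
    eventually_of_mem (isOpen_Ioi.mem_nhds hx) hup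
  have hed : ∀ x ∈ Set.Iio y, u =ᶠ[𝓝 x] Gf d₁ n₁ d₂ n₂ y := fun x hx =>
    eventually_of_mem (isOpen_Iio.mem_nhds hx) hdn
  refine ⟨?_, ?_, ?_⟩
  · intro x hx
    rcases lt_or_gt_of_ne (Set.mem_compl_singleton_iff.mp hx) with h | h
    · exact ((Gf_contDiff d₁ n₁ d₂ n₂ y).contDiffAt.congr_of_eventuallyEq
        (hed x h)).contDiffWithinAt
    · exact ((Gf_contDiff c₁ m₁ c₂ m₂ y).contDiffAt.congr_of_eventuallyEq
        (heu x h)).contDiffWithinAt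
  · intro x hx
    rcases lt_or_gt_of_ne hx with h | h
    · rw [(hed x h).iteratedDeriv_eq 4, Gf_iteratedDeriv, hdn x h]
      unfold Gf; rw [hn₁, hn₂]; ring
    · rw [(heu x h).iteratedDeriv_eq 4, Gf_iteratedDeriv, hup x h]
      unfold Gf; rw [hm₁, hm₂]; ring
  · refine ⟨Gf (c₁ * m₁ ^ 3) m₁ (c₂ * m₂ ^ 3) m₂ y y,
      Gf (d₁ * n₁ ^ 3) n₁ (d₂ * n₂ ^ 3) n₂ y y, ?_, ?_, ?_⟩
    · refine Tendsto.congr' ?_ (((Gf_contDiff (c₁ * m₁ ^ 3) m₁ (c₂ * m₂ ^ 3) m₂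
        y).continuous.tendsto y).mono_left nhdsWithin_le_nhds)
      filter_upwards [self_mem_nhdsWithin] with x hx
      rw [← Gf_iteratedDeriv, ← (heu x hx).iteratedDeriv_eq 3]
    · refine Tendsto.congr' ?_ (((Gf_contDiff (d₁ * n₁ ^ 3) n₁ (d₂ * n₂ ^ 3) n₂
        y).continuous.tendsto y).mono_left nhdsWithin_le_nhds)
      filter_upwards [self_mem_nhdsWithin] with x hx
      rw [← Gf_iteratedDeriv, ← (hed x hx).iteratedDeriv_eq 3]
    · simpa [Gf] using hjump

/-- `(4λ³)⁻¹ F₊(λ|x-y|)` (resp. with `F₋`) is a Green kernel for `d⁴/dx⁴ - λ⁴`: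
`u(x) = F(λ|x-y|)` is smooth away from `y`, satisfies `u'''' = λ⁴ u` there, and the
one-sided limits of `u'''` at `y` jump by `4λ³`. -/
theorem stmt4
    (Fp Fm : ℝ → ℂ)
    (hFp : Fp = fun s : ℝ => Complex.I * Complex.exp (Complex.I * (s : ℂ)) -
      Complex.exp (-(s : ℂ)))
    (hFm : Fm = fun s : ℝ => -Complex.I * Complex.exp (-(Complex.I * (s : ℂ))) -
      Complex.exp (-(s : ℂ)))
    (F : ℝ → ℂ) (hF : F = Fp ∨ F = Fm)
    (l : ℝ) (hl : 0 < l) (y : ℝ)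
    (u : ℝ → ℂ) (hu : u = fun x : ℝ => F (l * |x - y|)) :
    ContDiffOn ℝ (⊤ : ℕ∞) u {y}ᶜ ∧
    (∀ x : ℝ, x ≠ y → iteratedDeriv 4 u x = (l : ℂ) ^ 4 * u x) ∧
    (∃ Lp Lm : ℂ,
      Tendsto (iteratedDeriv 3 u) (𝓝[>] y) (𝓝 Lp) ∧
      Tendsto (iteratedDeriv 3 u) (𝓝[<] y) (𝓝 Lm) ∧
      Lp - Lm = 4 * (l : ℂ) ^ 3) := by
  have hI4 : (Complex.I * (l : ℂ)) ^ 4 = (l : ℂ) ^ 4 := by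
    rw [mul_pow]; simp [pow_succ, Complex.I_mul_I]
  have hI4' : (-(Complex.I * (l : ℂ))) ^ 4 = (l : ℂ) ^ 4 := by rw [neg_pow]; norm_num [hI4]
  have hl4 : (-(l : ℂ)) ^ 4 = (l : ℂ) ^ 4 := by rw [neg_pow]; norm_num
  rcases hF with hF | hF
  · refine master l y u Complex.I (Complex.I * l) (-1) (-l)
      Complex.I (-(Complex.I * l)) (-1) (l : ℂ) ?_ ?_ hI4 hl4 hI4' (by norm_num) ?_
    · intro x hx
      rw [hu, hF, hFp]
      have hxy : |x - y| = x - y := abs_of_pos (sub_pos.2 hx)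
      simp only [Gf, hxy]
      push_cast
      rw [show Complex.I * ((l : ℂ) * ((x : ℂ) - y)) = Complex.I * (l : ℂ) * ((x : ℂ) - y)
          from by ring,
        show -((l : ℂ) * ((x : ℂ) - y)) = -(l : ℂ) * ((x : ℂ) - y) from by ring]
      ring
    · intro x hx
      rw [hu, hF, hFp]
      have hxy : |x - y| = y - x := by rw [abs_sub_comm]; exact abs_of_pos (sub_pos.2 hx)
      simp only [Gf, hxy]
      push_cast
      rw [show Complex.I * ((l : ℂ) * ((y : ℂ) - x)) = -(Complex.I * (l : ℂ)) * ((x : ℂ) - y)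
          from by ring,
        show -((l : ℂ) * ((y : ℂ) - x)) = (l : ℂ) * ((x : ℂ) - y) from by ring]
      ring
    · have h3 : Complex.I ^ 3 = -Complex.I := by simp [pow_succ, Complex.I_mul_I]
      ring_nf
      rw [show Complex.I ^ 4 = 1 from by simp [pow_succ, Complex.I_mul_I]]
      ring
  · refine master l y u (-Complex.I) (-(Complex.I * l)) (-1) (-l)
      (-Complex.I) (Complex.I * l) (-1) (l : ℂ) ?_ ?_ hI4' hl4 hI4 (by norm_num) ?_
    · intro x hx
      rw [hu, hF, hFm]
      have hxy : |x - y| = x - y := abs_of_pos (sub_pos.2 hx)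
      simp only [Gf, hxy]
      push_cast
      rw [show -(Complex.I * ((l : ℂ) * ((x : ℂ) - y))) = -(Complex.I * (l : ℂ)) * ((x : ℂ) - y)
          from by ring,
        show -((l : ℂ) * ((x : ℂ) - y)) = -(l : ℂ) * ((x : ℂ) - y) from by ring]
      ring
    · intro x hx
      rw [hu, hF, hFm]
      have hxy : |x - y| = y - x := by rw [abs_sub_comm]; exact abs_of_pos (sub_pos.2 hx)
      simp only [Gf, hxy]
      push_cast
      rw [show -(Complex.I * ((l : ℂ) * ((y : ℂ) - x))) = Complex.I * (l : ℂ) * ((x : ℂ) - y)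
          from by ring,
        show -((l : ℂ) * ((y : ℂ) - x)) = (l : ℂ) * ((x : ℂ) - y) from by ring]
      ring
    · ring_nf
      rw [show Complex.I ^ 4 = 1 from by simp [pow_succ, Complex.I_mul_I]]
      ring
end

section
/- Let F : ℝ → ℂ be continuously differentiable with sup_{s ≥ 0} (|F(s)| + |F′(s)|) < ∞. Let g : ℝ → ℂ be measurable with ∫_ℝ (1+|y|)|g(y)| dy < ∞ and ∫_ℝ g(y) dy = 0. Then for every λ > 0 and every x ∈ ℝ, both of the following integrals converge absolutely and ∫_ℝ F(λ|x−y|) g(y) dy = −λ·∫_ℝ ∫₀¹ sgn(x−θy)·F′(λ|x−θy|)·y·g(y) dθ dy. -/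
/-!
By the fundamental theorem of calculus along the segment from `x` to `x - y` (the map
`t ↦ F (l * |t|)` is differentiable off `t = 0`, with derivative `l * sign t * F' (l * |t|)`),
`F (l * |x - y|) = F (l * |x|) - l * y * ∫₀¹ sign (x - θ y) F' (l * |x - θ y|) dθ`.
Multiplying by `g y` and integrating, the term `F (l * |x|) * ∫ g` vanishes; the remaining
integrand is bounded by `sup |F'| * |y| * |g y|`, which gives absolute convergence.
-/

open MeasureTheory Set

namespace Real

theorem measurable_sign_s5 : Measurable Real.sign :=
  Measurable.ite measurableSet_Iio measurable_const
    (Measurable.ite measurableSet_Ioi measurable_const measurable_const)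

theorem abs_sign_le_one (r : ℝ) : |sign r| ≤ 1 := by
  rcases sign_apply_eq r with h | h | h <;> simp [h]

theorem hasDerivAt_abs_sign {x : ℝ} (hx : x ≠ 0) : HasDerivAt (|·|) (sign x) x := by
  rcases hx.lt_or_gt with h | h
  · simpa [sign_of_neg h] using hasDerivAt_abs_neg h
  · simpa [sign_of_pos h] using hasDerivAt_abs_pos h

end Real

section Calculus

variable {E : Type*} [NormedAddCommGroup E] [NormedSpace ℝ E]

theorem hasDerivAt_comp_mul_abs {F : ℝ → E} {l t : ℝ} (hF : DifferentiableAt ℝ F (l * |t|))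
    (ht : t ≠ 0) :
    HasDerivAt (fun s => F (l * |s|)) ((l * Real.sign t) • deriv F (l * |t|)) t :=
  hF.hasDerivAt.scomp t ((Real.hasDerivAt_abs_sign ht).const_mul l)

theorem eq_sub_smul_integral_comp_sub_mul [CompleteSpace E] {G G' : ℝ → E} {s : Set ℝ}
    (hs : s.Countable) (hG : Continuous G) (hG' : ∀ t ∉ s, HasDerivAt G (G' t) t) {x y : ℝ}
    (hint : IntervalIntegrable G' volume (x - y) x) :
    G (x - y) = G x - y • ∫ θ in (0 : ℝ)..1, G' (x - θ * y) := by
  rcases eq_or_ne y 0 with rfl | hy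
  · simp
  have hFTC := integral_eq_of_hasDerivAt_off_countable G G' hs hG.continuousOn
    (fun t ht => hG' t ht.2) hint
  simp_rw [mul_comm _ y]
  rw [intervalIntegral.integral_comp_sub_mul G' hy, smul_inv_smul₀ hy]
  simp [hFTC]

theorem comp_mul_abs_sub_eq [CompleteSpace E] {F : ℝ → E} (hF : ContDiff ℝ 1 F)
    (l x y : ℝ) :
    F (l * |x - y|) = F (l * |x|) -
      (l * y) • ∫ θ in (0 : ℝ)..1, Real.sign (x - θ * y) • deriv F (l * |x - θ * y|) := by
  have hF' : Continuous (deriv F) := hF.continuous_deriv le_rfl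
  have hint :
      IntervalIntegrable (fun t => (l * Real.sign t) • deriv F (l * |t|)) volume (x - y) x := by
    refine IntervalIntegrable.mono_fun' (g := fun t => |l| * ‖deriv F (l * |t|)‖)
      (by apply Continuous.intervalIntegrable; fun_prop) ?_ (ae_of_all _ fun t => ?_)
    · exact (measurable_const.mul Real.measurable_sign_s5).aestronglyMeasurable.smul
        (hF'.comp (by fun_prop)).aestronglyMeasurable
    · simp only [norm_smul, norm_mul, Real.norm_eq_abs]
      gcongr
      exact mul_le_of_le_one_right (abs_nonneg l) (Real.abs_sign_le_one t)
  rw [eq_sub_smul_integral_comp_sub_mul (G := fun t => F (l * |t|)) (countable_singleton 0)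
    (hF.continuous.comp (by fun_prop))
    (fun t ht => hasDerivAt_comp_mul_abs (hF.differentiable one_ne_zero _) ht) hint]
  simp_rw [mul_smul, intervalIntegral.integral_smul, smul_comm y l]

end Calculus

section MomentCancellation

variable {F g : ℝ → ℂ} {M l x : ℝ}

theorem comp_mul_abs_sub_mul_eq (hF : ContDiff ℝ 1 F) (l x y : ℝ) (c : ℂ) :
    F (l * |x - y|) * c = F (l * |x|) * c - l * ∫ θ in (0 : ℝ)..1,
      (Real.sign (x - θ * y) : ℂ) * deriv F (l * |x - θ * y|) * (y * c) := by
  simp_rw [comp_mul_abs_sub_eq hF l x y, intervalIntegral.integral_mul_const, Complex.real_smul]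
  push_cast
  ring

theorem integrable_comp_mul_abs_sub_mul (hF : Continuous F)
    (hFb : ∀ s, 0 ≤ s → ‖F s‖ ≤ M) (hl : 0 ≤ l) (hg : Integrable g) :
    Integrable (fun y => F (l * |x - y|) * g y) :=
  hg.bdd_mul (hF.comp (by fun_prop)).aestronglyMeasurable
    (ae_of_all _ fun y => hFb _ (by positivity))

theorem integrable_sign_mul_deriv_comp_mul_abs_sub_mul (hF' : Continuous (deriv F))
    (hF'b : ∀ s, 0 ≤ s → ‖deriv F s‖ ≤ M) (hl : 0 ≤ l)
    (hyg : Integrable (fun y : ℝ => (y : ℂ) * g y)) (ν : Measure ℝ) [IsFiniteMeasure ν] :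
    Integrable (fun p : ℝ × ℝ =>
      (Real.sign (x - p.2 * p.1) : ℂ) * deriv F (l * |x - p.2 * p.1|) * ((p.1 : ℂ) * g p.1))
      (volume.prod ν) := by
  refine (hyg.comp_fst ν).bdd_mul (c := M) ?_ (ae_of_all _ fun p => ?_)
  · exact (Complex.measurable_ofReal.comp
      (Real.measurable_sign_s5.comp (by fun_prop))).aestronglyMeasurable.mul
      (hF'.comp (by fun_prop)).aestronglyMeasurable
  · rw [norm_mul, Complex.norm_real, Real.norm_eq_abs]
    exact (mul_le_of_le_one_left (norm_nonneg _) (Real.abs_sign_le_one _)).trans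
      (hF'b _ (by positivity))

end MomentCancellation

/-- Order-one moment cancellation: if `g` has vanishing zeroth moment, then
`∫ F(λ|x-y|) g(y) dy = -λ ∫∫ sgn(x-θy) F'(λ|x-θy|) y g(y) dθ dy`,
both integrals being absolutely convergent. -/
theorem stmt5 (F : ℝ → ℂ) (hF : ContDiff ℝ 1 F)
    (hbd : ∃ M : ℝ, ∀ s : ℝ, 0 ≤ s → ‖F s‖ + ‖deriv F s‖ ≤ M)
    (g : ℝ → ℂ) (hgm : Measurable g)
    (hgint : Integrable (fun y : ℝ => (1 + |y|) * ‖g y‖))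
    (hg0 : ∫ y : ℝ, g y = 0)
    (l : ℝ) (hl : 0 < l) (x : ℝ) :
    Integrable (fun y : ℝ => F (l * |x - y|) * g y) ∧
    Integrable
      (fun p : ℝ × ℝ =>
        (Real.sign (x - p.2 * p.1) : ℂ) * deriv F (l * |x - p.2 * p.1|) * ((p.1 : ℂ) * g p.1))
      (volume.prod (volume.restrict (Set.Icc 0 1))) ∧
    ∫ y : ℝ, F (l * |x - y|) * g y =
      -(l : ℂ) * ∫ y : ℝ, ∫ θ in (0:ℝ)..1,
        (Real.sign (x - θ * y) : ℂ) * deriv F (l * |x - θ * y|) * ((y : ℂ) * g y) := by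
  obtain ⟨M, hM⟩ := hbd
  have hg : Integrable g := hgint.mono' hgm.aestronglyMeasurable (ae_of_all _ fun y => by
    nlinarith [norm_nonneg (g y), abs_nonneg y])
  have hyg : Integrable (fun y : ℝ => (y : ℂ) * g y) :=
    hgint.mono' (by fun_prop) (ae_of_all _ fun y => by
      rw [norm_mul, Complex.norm_real, Real.norm_eq_abs]
      nlinarith [norm_nonneg (g y)])
  have hprod := integrable_sign_mul_deriv_comp_mul_abs_sub_mul (x := x)
    (hF.continuous_deriv le_rfl)
    (fun s hs => (le_add_of_nonneg_left (norm_nonneg _)).trans (hM s hs)) hl.le hyg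
    (volume.restrict (Icc 0 1))
  have hinner : Integrable (fun y : ℝ => ∫ θ in (0:ℝ)..1,
      (Real.sign (x - θ * y) : ℂ) * deriv F (l * |x - θ * y|) * ((y : ℂ) * g y)) := by
    simpa only [intervalIntegral.integral_of_le zero_le_one, integral_Icc_eq_integral_Ioc]
      using hprod.integral_prod_left
  refine ⟨integrable_comp_mul_abs_sub_mul hF.continuous
    (fun s hs => (le_add_of_nonneg_right (norm_nonneg _)).trans (hM s hs)) hl.le hg, hprod, ?_⟩
  simp_rw [comp_mul_abs_sub_mul_eq hF l x _ (g _)]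
  rw [integral_sub (hg.const_mul _) (hinner.const_mul _), integral_const_mul, integral_const_mul,
    hg0]
  ring
end

section
/- Let χ : ℝ → ℝ be twice continuously differentiable, supported in [−1,1], with χ = 1 on [−1/2,1/2] and 0 ≤ χ ≤ 1. Then there exists a constant C > 0, depending only on χ, such that for every A > 0, every s ≥ 0 and t ∈ ℝ with s + |t| ≥ 1, and every twice continuously differentiable c : ℝ → ℂ satisfying |c(λ)| ≤ A·e^{λs}, |c′(λ)| ≤ A·e^{λs}, |c″(λ)| ≤ A·e^{λs} for all λ ≥ 0, one has |∫₀^∞ e^{−λ(s+it)}·χ(λ)·c(λ) dλ − c(0)/(s+it)| ≤ C·A·(s+|t|)^{−2}. -/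
/-!
Since `χ` is `C²` and supported in `[-1, 1]`, the product `u = χ c` vanishes together with `u'`
at `λ = 1`, while `u(0) = c(0)` and `u'(0) = c'(0)` because `χ = 1` near `0`. Two integrations by
parts on `[0, 1]` against `e^{-λz}`, `z = s + it`, give
`∫₀^∞ e^{-λz} u = c(0)/z + (c'(0) + ∫₀¹ e^{-λz} u'') / z²`.
On `[0, 1]` the factor `|e^{-λz}| = e^{-λs}` cancels the growth `e^{λs}` of `c, c', c''`, so the
numerator is `O(A)`, and `|z|² ≥ (s + |t|)² / 2`.
-/

open MeasureTheory Set Topology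

lemma hasDerivAt_cexp_neg_ofReal_mul (z : ℂ) (x : ℝ) :
    HasDerivAt (fun l : ℝ => Complex.exp (-(l : ℂ) * z)) (-z * Complex.exp (-(x : ℂ) * z)) x := by
  simpa [mul_comm] using (((hasDerivAt_id (x : ℂ)).neg.mul_const z).cexp).comp_ofReal

section IntegrationByParts

variable {z : ℂ} {b : ℝ}

lemma integral_cexp_neg_mul_mul_eq_of_apply_eq_zero {u u' : ℝ → ℂ} (hz : z ≠ 0)
    (hu : ∀ x, HasDerivAt u (u' x) x) (hu' : Continuous u') (hub : u b = 0) :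
    ∫ l in (0 : ℝ)..b, Complex.exp (-(l : ℂ) * z) * u l
      = u 0 / z + (∫ l in (0 : ℝ)..b, Complex.exp (-(l : ℂ) * z) * u' l) / z := by
  have hv : ∀ x ∈ uIcc (0 : ℝ) b,
      HasDerivAt (fun l : ℝ => -Complex.exp (-(l : ℂ) * z) / z) (Complex.exp (-(x : ℂ) * z)) x := by
    intro x _
    have h := (hasDerivAt_cexp_neg_ofReal_mul z x).neg.div_const z
    rw [neg_mul, neg_neg, mul_div_cancel_left₀ _ hz] at h
    exact h
  have hexp : Continuous fun l : ℝ => Complex.exp (-(l : ℂ) * z) := by fun_prop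
  simp_rw [mul_comm (Complex.exp _)]
  rw [intervalIntegral.integral_mul_deriv_eq_deriv_mul (fun x _ => hu x) hv
    (hu'.intervalIntegrable 0 b) (hexp.intervalIntegrable 0 b), hub]
  simp_rw [mul_div_assoc', mul_neg, neg_div, intervalIntegral.integral_neg,
    intervalIntegral.integral_div]
  simp

lemma integral_cexp_neg_mul_mul_eq_of_contDiff_two {u : ℝ → ℂ} (hz : z ≠ 0)
    (hu : ContDiff ℝ 2 u) (hub : u b = 0) (hu'b : deriv u b = 0) :
    ∫ l in (0 : ℝ)..b, Complex.exp (-(l : ℂ) * z) * u l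
      = u 0 / z + deriv u 0 / z ^ 2
        + (∫ l in (0 : ℝ)..b, Complex.exp (-(l : ℂ) * z) * deriv (deriv u) l) / z ^ 2 := by
  have hu' : ContDiff ℝ 1 (deriv u) := hu.deriv'
  rw [integral_cexp_neg_mul_mul_eq_of_apply_eq_zero hz
      (fun x => (hu.differentiable two_ne_zero x).hasDerivAt) (hu.continuous_deriv one_le_two) hub,
    integral_cexp_neg_mul_mul_eq_of_apply_eq_zero hz
      (fun x => (hu'.differentiable one_ne_zero x).hasDerivAt) (hu'.continuous_deriv le_rfl) hu'b]
  field_simp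
  ring

lemma norm_integral_cexp_neg_mul_mul_le {g : ℝ → ℂ} {M : ℝ} (hb : 0 ≤ b)
    (hg : ∀ l ∈ Icc 0 b, ‖g l‖ ≤ M * Real.exp (l * z.re)) :
    ‖∫ l in (0 : ℝ)..b, Complex.exp (-(l : ℂ) * z) * g l‖ ≤ M * b := by
  have h : ∀ l ∈ uIoc 0 b, ‖Complex.exp (-(l : ℂ) * z) * g l‖ ≤ M := by
    intro l hl
    rw [uIoc_of_le hb] at hl
    calc ‖Complex.exp (-(l : ℂ) * z) * g l‖
        = Real.exp (-(l * z.re)) * ‖g l‖ := by simp [Complex.norm_exp]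
      _ ≤ Real.exp (-(l * z.re)) * (M * Real.exp (l * z.re)) := by
          gcongr
          exact hg l (Ioc_subset_Icc_self hl)
      _ = M := by rw [mul_left_comm, ← Real.exp_add]; simp
  simpa [abs_of_nonneg hb] using intervalIntegral.norm_integral_le_of_norm_le_const h

end IntegrationByParts

lemma apply_right_eq_zero_of_support_subset_Icc {E : Type*} [TopologicalSpace E] [T1Space E]
    [Zero E] {f : ℝ → E} {a b : ℝ} (hf : Continuous f) (hsupp : Function.support f ⊆ Icc a b) :
    f b = 0 := by
  have : Ioi b ⊆ f ⁻¹' {0} := fun x hx => Function.notMem_support.mp fun h => (hsupp h).2.not_gt hx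
  have := closure_minimal this (isClosed_singleton.preimage hf)
  rw [closure_Ioi] at this
  exact this self_mem_Ici

lemma sq_abs_re_add_abs_im_le (z : ℂ) : (|z.re| + |z.im|) ^ 2 ≤ 2 * ‖z‖ ^ 2 := by
  rw [Complex.sq_norm, Complex.normSq_apply]
  nlinarith [sq_nonneg (|z.re| - |z.im|), sq_abs z.re, sq_abs z.im]

section CutoffProduct

variable {χ : ℝ → ℝ} {c : ℝ → ℂ}

lemma deriv_ofReal_comp_mul (hχ : Differentiable ℝ χ) (hc : Differentiable ℝ c) :
    deriv (fun l => (χ l : ℂ) * c l) = fun l => ((deriv χ l : ℝ) : ℂ) * c l + χ l * deriv c l :=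
  funext fun l => ((hχ l).hasDerivAt.ofReal_comp.mul (hc l).hasDerivAt).deriv

lemma norm_deriv_deriv_ofReal_comp_mul_le (hχ : ContDiff ℝ 2 χ) (hc : ContDiff ℝ 2 c) {l K B : ℝ}
    (hχl : |χ l| ≤ K) (hχ'l : |deriv χ l| ≤ K) (hχ''l : |deriv (deriv χ) l| ≤ K)
    (hcl : ‖c l‖ ≤ B) (hc'l : ‖deriv c l‖ ≤ B) (hc''l : ‖deriv (deriv c) l‖ ≤ B) :
    ‖deriv (deriv (fun l => (χ l : ℂ) * c l)) l‖ ≤ 4 * K * B := by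
  have hχd := hχ.differentiable two_ne_zero
  have hχ'd := hχ.deriv'.differentiable one_ne_zero
  have hcd := hc.differentiable two_ne_zero
  have hc'd := hc.deriv'.differentiable one_ne_zero
  have hK : 0 ≤ K := (abs_nonneg _).trans hχl
  have hu'' : HasDerivAt (fun l => ((deriv χ l : ℝ) : ℂ) * c l + χ l * deriv c l)
      (((deriv (deriv χ) l : ℝ) : ℂ) * c l + ((deriv χ l : ℝ) : ℂ) * deriv c l
        + (((deriv χ l : ℝ) : ℂ) * deriv c l + χ l * deriv (deriv c) l)) l :=
    ((hχ'd l).hasDerivAt.ofReal_comp.mul (hcd l).hasDerivAt).add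
      ((hχd l).hasDerivAt.ofReal_comp.mul (hc'd l).hasDerivAt)
  rw [deriv_ofReal_comp_mul hχd hcd, hu''.deriv]
  have bound {x : ℝ} {w : ℂ} (hx : |x| ≤ K) (hw : ‖w‖ ≤ B) : ‖(x : ℂ) * w‖ ≤ K * B := by
    rw [norm_mul, Complex.norm_real, Real.norm_eq_abs]
    exact mul_le_mul hx hw (norm_nonneg _) hK
  calc _ ≤ K * B + K * B + (K * B + K * B) :=
        (norm_add_le _ _).trans (add_le_add ((norm_add_le _ _).trans
          (add_le_add (bound hχ''l hcl) (bound hχ'l hc'l)))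
          ((norm_add_le _ _).trans (add_le_add (bound hχ'l hc'l) (bound hχl hc''l))))
    _ = 4 * K * B := by ring

lemma integral_Ioi_cexp_mul_cutoff_mul_sub_eq (hχ : ContDiff ℝ 2 χ)
    (hχsupp : Function.support χ ⊆ Icc (-1) 1) (hχ0 : χ =ᶠ[𝓝 0] 1) (hc : ContDiff ℝ 2 c)
    {z : ℂ} (hz : z ≠ 0) :
    (∫ l in Ioi (0 : ℝ), Complex.exp (-(l : ℂ) * z) * (χ l : ℂ) * c l) - c 0 / z
      = (deriv c 0 + ∫ l in (0 : ℝ)..1,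
          Complex.exp (-(l : ℂ) * z) * deriv (deriv (fun l => (χ l : ℂ) * c l)) l) / z ^ 2 := by
  have hu : ContDiff ℝ 2 fun l => (χ l : ℂ) * c l := (Complex.ofRealCLM.contDiff.comp hχ).mul hc
  have hu' := deriv_ofReal_comp_mul (hχ.differentiable two_ne_zero) (hc.differentiable two_ne_zero)
  have hχ1 : χ 1 = 0 := apply_right_eq_zero_of_support_subset_Icc hχ.continuous hχsupp
  have hχ'1 : deriv χ 1 = 0 := apply_right_eq_zero_of_support_subset_Icc
    (hχ.continuous_deriv one_le_two)
    (support_deriv_subset.trans (closure_minimal hχsupp isClosed_Icc))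
  have hχ'0 : deriv χ 0 = 0 := by rw [hχ0.deriv_eq]; simp
  have hχ0' : χ 0 = 1 := hχ0.eq_of_nhds
  have hIoi : ∫ l in Ioi (0 : ℝ), Complex.exp (-(l : ℂ) * z) * (χ l : ℂ) * c l
      = ∫ l in (0 : ℝ)..1, Complex.exp (-(l : ℂ) * z) * ((χ l : ℂ) * c l) := by
    rw [intervalIntegral.integral_of_le zero_le_one,
      setIntegral_eq_of_subset_of_forall_sdiff_eq_zero measurableSet_Ioi (s := Ioc 0 1)
        Ioc_subset_Ioi_self]
    · simp_rw [mul_assoc]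
    · rintro x ⟨hx0, hx⟩
      have : χ x = 0 := Function.notMem_support.mp fun h => hx ⟨hx0, (hχsupp h).2⟩
      simp [this]
  rw [hIoi, integral_cexp_neg_mul_mul_eq_of_contDiff_two hz hu (by simp [hχ1])
    (by simp [hu', hχ1, hχ'1]), hu']
  field_simp
  simp [hχ0', hχ'0]
  ring

end CutoffProduct

theorem stmt11_general (χ : ℝ → ℝ) (hχ : ContDiff ℝ 2 χ)
    (hχsupp : Function.support χ ⊆ Set.Icc (-1) 1)
    (hχone : ∀ x ∈ Set.Icc (-(1:ℝ)/2) (1/2), χ x = 1) :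
    ∃ C > 0, ∀ A > 0, ∀ s : ℝ, 0 ≤ s → ∀ t : ℝ, 1 ≤ s + |t| →
      ∀ c : ℝ → ℂ, ContDiff ℝ 2 c →
      (∀ l : ℝ, 0 ≤ l → ‖c l‖ ≤ A * Real.exp (l * s)) →
      (∀ l : ℝ, 0 ≤ l → ‖deriv c l‖ ≤ A * Real.exp (l * s)) →
      (∀ l : ℝ, 0 ≤ l → ‖deriv (deriv c) l‖ ≤ A * Real.exp (l * s)) →
      ‖(∫ l in Set.Ioi (0:ℝ),
            Complex.exp (-(l : ℂ) * ((s : ℂ) + Complex.I * (t : ℂ))) * (χ l : ℂ) * c l)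
          - c 0 / ((s : ℂ) + Complex.I * (t : ℂ))‖
        ≤ C * A / (s + |t|) ^ 2 := by
  have hχ0 : χ =ᶠ[𝓝 0] 1 :=
    Filter.eventuallyEq_of_mem (Icc_mem_nhds (by norm_num) (by norm_num)) hχone
  obtain ⟨K, hK⟩ := (isCompact_Icc (a := (0 : ℝ)) (b := 1)).exists_bound_of_continuousOn
    (f := fun l => |χ l| + |deriv χ l| + |deriv (deriv χ) l|)
    ((hχ.continuous.abs.add (hχ.continuous_deriv one_le_two).abs).add
      (hχ.deriv'.continuous_deriv le_rfl).abs).continuousOn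
  have hχK : ∀ l ∈ Icc (0 : ℝ) 1, |χ l| ≤ K ∧ |deriv χ l| ≤ K ∧ |deriv (deriv χ) l| ≤ K := by
    intro l hl
    have := (Real.le_norm_self _).trans (hK l hl)
    refine ⟨?_, ?_, ?_⟩ <;> linarith [abs_nonneg (χ l), abs_nonneg (deriv χ l),
      abs_nonneg (deriv (deriv χ) l)]
  have hK0 : 0 ≤ K := (norm_nonneg _).trans (hK 0 ⟨le_rfl, zero_le_one⟩)
  refine ⟨2 * (1 + 4 * K), by positivity, fun A hA s hs t hst c hc hc0 hc1 hc2 => ?_⟩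
  set z : ℂ := (s : ℂ) + Complex.I * (t : ℂ)
  have hzre : z.re = s := by simp [z]
  have hzst : (s + |t|) ^ 2 ≤ 2 * ‖z‖ ^ 2 := by
    simpa [z, abs_of_nonneg hs] using sq_abs_re_add_abs_im_le z
  have hz : z ≠ 0 := by
    rintro h
    rw [h, norm_zero] at hzst
    nlinarith
  have hc'0 : ‖deriv c 0‖ ≤ A := by simpa using hc1 0 le_rfl
  have hJ := norm_integral_cexp_neg_mul_mul_le (z := z) (M := 4 * K * A) zero_le_one fun l hl => by
    rw [hzre, mul_assoc]
    exact norm_deriv_deriv_ofReal_comp_mul_le hχ hc (hχK l hl).1 (hχK l hl).2.1 (hχK l hl).2.2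
      (hc0 l hl.1) (hc1 l hl.1) (hc2 l hl.1)
  rw [integral_Ioi_cexp_mul_cutoff_mul_sub_eq hχ hχsupp hχ0 hc hz, norm_div, norm_pow]
  calc _ ≤ (A + 4 * K * A * 1) / ((s + |t|) ^ 2 / 2) :=
        div_le_div₀ (by positivity) ((norm_add_le _ _).trans (add_le_add hc'0 hJ))
          (by positivity) (by linarith)
    _ = 2 * (1 + 4 * K) * A / (s + |t|) ^ 2 := by field_simp

/-- Leading-term extraction for the damped integral (using `χ(0) = 1`):
`∫₀^∞ e^{-λ(s+it)} χ(λ) c(λ) dλ = c(0)/(s+it) + O(A (s+|t|)⁻²)` for `s + |t| ≥ 1`. -/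
theorem stmt11 (χ : ℝ → ℝ) (hχ : ContDiff ℝ 2 χ)
    (hχsupp : Function.support χ ⊆ Set.Icc (-1) 1)
    (hχone : ∀ x ∈ Set.Icc (-(1:ℝ)/2) (1/2), χ x = 1)
    (hχbd : ∀ x : ℝ, 0 ≤ χ x ∧ χ x ≤ 1) :
    ∃ C > 0, ∀ A > 0, ∀ s : ℝ, 0 ≤ s → ∀ t : ℝ, 1 ≤ s + |t| →
      ∀ c : ℝ → ℂ, ContDiff ℝ 2 c →
      (∀ l : ℝ, 0 ≤ l → ‖c l‖ ≤ A * Real.exp (l * s)) →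
      (∀ l : ℝ, 0 ≤ l → ‖deriv c l‖ ≤ A * Real.exp (l * s)) →
      (∀ l : ℝ, 0 ≤ l → ‖deriv (deriv c) l‖ ≤ A * Real.exp (l * s)) →
      ‖(∫ l in Set.Ioi (0:ℝ),
            Complex.exp (-(l : ℂ) * ((s : ℂ) + Complex.I * (t : ℂ))) * (χ l : ℂ) * c l)
          - c 0 / ((s : ℂ) + Complex.I * (t : ℂ))‖
        ≤ C * A / (s + |t|) ^ 2 :=
  stmt11_general χ hχ hχsupp hχone
end

section
/- Let χ : ℝ → ℝ be twice continuously differentiable, supported in [−1,1], with χ = 1 on [−1/2,1/2] and 0 ≤ χ ≤ 1. Then there exists a constant C > 0, depending only on χ, such that for every A > 0, every twice continuously differentiable b : (0,∞) → ℂ satisfying |b(λ)| ≤ A, |b′(λ)| ≤ A·λ^{−1}, |b″(λ)| ≤ A·λ^{−2} for all λ > 0, and every s ∈ ℝ, one has |∫₀^∞ e^{iλs}·λ·χ(λ)·b(λ) dλ| ≤ C·A·(1+|s|)^{−3/2}. -/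
/-!
Write the integrand as `e^{ixs} g(x) b(x)` with `g(x) = x χ(x)`, which vanishes to first order
at `0` and beyond `1`. On `(0, 2]` the amplitude `φ = g b` satisfies `|φ| ≲ A x`, `|φ'| ≲ A` and
`|φ''| ≲ A / x`. For `|s| > 1` split the integral at `T = 1 / |s|`: the piece over `(0, T]` is at
most `A T²`, and two integrations by parts on `[T, 2]` bound the rest by
`A T / |s| + A / s² + s⁻² ∫_T^2 A / x dx`. Altogether this is `A (1 + log |s|) / s²`,
which is `O(A |s|^{-3/2})`.
-/

open MeasureTheory Set Complex

lemma norm_cexp_I_mul_mul (x s : ℝ) : ‖cexp (I * x * s)‖ = 1 := by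
  rw [norm_exp]; simp

lemma hasDerivAt_cexp_I_mul_mul_div {s : ℝ} (hs : s ≠ 0) (x : ℝ) :
    HasDerivAt (fun x : ℝ => cexp (I * x * s) / (I * s)) (cexp (I * x * s)) x := by
  have hIs : I * s ≠ 0 := mul_ne_zero I_ne_zero (ofReal_ne_zero.mpr hs)
  have h := ((((hasDerivAt_id x).ofReal_comp).const_mul I).mul_const (s : ℂ)).cexp.div_const (I * s)
  simpa [mul_div_assoc, div_self hIs] using h

theorem norm_integral_cexp_mul_le {φ φ' : ℝ → ℂ} {a c s : ℝ} (hs : s ≠ 0)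
    (hφ : ∀ x ∈ uIcc a c, HasDerivAt φ (φ' x) x) (hφ' : IntervalIntegrable φ' volume a c)
    (hc : φ c = 0) :
    ‖∫ x in a..c, cexp (I * x * s) * φ x‖ ≤
      (‖φ a‖ + ‖∫ x in a..c, cexp (I * x * s) * φ' x‖) / |s| := by
  have hparts := intervalIntegral.integral_mul_deriv_eq_deriv_mul hφ
    (fun x _ => hasDerivAt_cexp_I_mul_mul_div hs x) hφ'
    ((by fun_prop : Continuous fun x : ℝ => cexp (I * x * s)).intervalIntegrable a c)
  have hnorm : ‖I * (s : ℂ)‖ = |s| := by simp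
  simp_rw [mul_comm (cexp _), hparts, hc, zero_mul, zero_sub, ← mul_div_assoc,
    intervalIntegral.integral_div]
  calc ‖-(φ a * cexp (I * a * s) / (I * s)) - (∫ x in a..c, φ' x * cexp (I * x * s)) / (I * s)‖
      ≤ ‖φ a * cexp (I * a * s) / (I * s)‖ + ‖(∫ x in a..c, φ' x * cexp (I * x * s)) / (I * s)‖ :=
        (norm_sub_le _ _).trans_eq (by rw [norm_neg])
    _ = _ := by rw [norm_div, norm_div, norm_mul, norm_cexp_I_mul_mul, hnorm, mul_one, add_div]

theorem norm_integral_cexp_mul_le_of_hasDerivAt_two {φ φ' φ'' : ℝ → ℂ} {a c s : ℝ} (hac : a ≤ c)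
    (hs : s ≠ 0) (hφ : ∀ x ∈ Icc a c, HasDerivAt φ (φ' x) x)
    (hφ' : ∀ x ∈ Icc a c, HasDerivAt φ' (φ'' x) x) (hφ'' : IntervalIntegrable φ'' volume a c)
    (hc : φ c = 0) (hc' : φ' c = 0) :
    ‖∫ x in a..c, cexp (I * x * s) * φ x‖ ≤
      ‖φ a‖ / |s| + (‖φ' a‖ + ∫ x in a..c, ‖φ'' x‖) / s ^ 2 := by
  rw [← uIcc_of_le hac] at hφ hφ'
  have hφ'_int : IntervalIntegrable φ' volume a c :=
    ContinuousOn.intervalIntegrable fun x hx => (hφ' x hx).continuousAt.continuousWithinAt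
  have hφ''_norm : ‖∫ x in a..c, cexp (I * x * s) * φ'' x‖ ≤ ∫ x in a..c, ‖φ'' x‖ :=
    (intervalIntegral.norm_integral_le_integral_norm hac).trans_eq <| by
      simp_rw [norm_mul, norm_cexp_I_mul_mul, one_mul]
  calc ‖∫ x in a..c, cexp (I * x * s) * φ x‖
      ≤ (‖φ a‖ + ‖∫ x in a..c, cexp (I * x * s) * φ' x‖) / |s| :=
        norm_integral_cexp_mul_le hs hφ hφ'_int hc
    _ ≤ (‖φ a‖ + (‖φ' a‖ + ∫ x in a..c, ‖φ'' x‖) / |s|) / |s| := by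
        gcongr
        exact (norm_integral_cexp_mul_le hs hφ' hφ'' hc').trans (by gcongr)
    _ = ‖φ a‖ / |s| + (‖φ' a‖ + ∫ x in a..c, ‖φ'' x‖) / s ^ 2 := by
        rw [add_div, div_div, ← sq, sq_abs]

lemma norm_setIntegral_Ioc_zero_le {F : ℝ → ℂ} {B c : ℝ} (hB : 0 ≤ B) (hc : 0 ≤ c)
    (hF : ∀ x ∈ Ioc 0 c, ‖F x‖ ≤ B * x) : ‖∫ x in Ioc 0 c, F x‖ ≤ B * c ^ 2 := by
  have h := norm_setIntegral_le_of_norm_le_const (μ := volume) (f := F) (C := B * c)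
    measure_Ioc_lt_top fun x hx => (hF x hx).trans (by gcongr; exact hx.2)
  rwa [Real.volume_real_Ioc_of_le hc, sub_zero, mul_assoc, ← sq] at h

lemma rpow_three_halves {x : ℝ} (hx : 0 ≤ x) : x ^ (3 / 2 : ℝ) = x * √x := by
  rw [show (3 / 2 : ℝ) = 1 + 1 / 2 by norm_num, Real.rpow_add' hx (by norm_num), Real.rpow_one,
    Real.sqrt_eq_rpow]

lemma one_add_rpow_three_halves_le_four {S : ℝ} (hS0 : 0 ≤ S) (hS1 : S ≤ 1) :
    (1 + S) ^ (3 / 2 : ℝ) ≤ 4 := by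
  have h : √(1 + S) ≤ 2 := Real.sqrt_le_iff.mpr ⟨by norm_num, by linarith⟩
  rw [rpow_three_halves (by linarith)]
  nlinarith [Real.sqrt_nonneg (1 + S)]

lemma one_add_log_two_mul_le {S : ℝ} (hS : 1 ≤ S) : 1 + Real.log (2 * S) ≤ 2 * √S := by
  have hlog2 := Real.log_two_lt_d9
  have hlogS : Real.log S ≤ 2 * (√S - 1) := by
    have h := Real.log_le_sub_one_of_pos (Real.sqrt_pos.mpr (by linarith : 0 < S))
    rw [Real.log_sqrt (by linarith)] at h
    linarith
  rw [Real.log_mul two_ne_zero (by positivity)]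
  norm_num at hlog2
  linarith

lemma one_add_log_two_mul_div_sq_le {S : ℝ} (hS : 1 ≤ S) :
    (1 + Real.log (2 * S)) / S ^ 2 ≤ 8 / (1 + S) ^ (3 / 2 : ℝ) := by
  have hsqrt : √(1 + S) ≤ √2 * √S := by
    rw [← Real.sqrt_mul zero_le_two]; exact Real.sqrt_le_sqrt (by linarith)
  have hsqrt2 : √2 ≤ 2 := Real.sqrt_le_iff.mpr ⟨by norm_num, by norm_num⟩
  have hpow : (1 + S) ^ (3 / 2 : ℝ) ≤ 4 * S * √S := by
    rw [rpow_three_halves (by linarith)]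
    calc (1 + S) * √(1 + S) ≤ (2 * S) * (2 * √S) := by
          gcongr
          · linarith
          · exact hsqrt.trans (by gcongr)
      _ = 4 * S * √S := by ring
  rw [div_le_div_iff₀ (by positivity) (by positivity)]
  calc (1 + Real.log (2 * S)) * (1 + S) ^ (3 / 2 : ℝ) ≤ (2 * √S) * (4 * S * √S) := by
        gcongr
        exact one_add_log_two_mul_le hS
    _ = 8 * S ^ 2 := by
        rw [show 2 * √S * (4 * S * √S) = 8 * S * (√S * √S) by ring,
          Real.mul_self_sqrt (by linarith)]
        ring

def SymbolBounds (A : ℝ) (b : ℝ → ℂ) : Prop :=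
  ∀ l, 0 < l → ‖b l‖ ≤ A ∧ ‖deriv b l‖ ≤ A / l ∧ ‖deriv (deriv b) l‖ ≤ A / l ^ 2

/-- Bounds on `[0, 2]` rather than `[0, 1]`: integrating by parts up to `2`, where `g` vanishes
on a neighbourhood, leaves no boundary terms there. -/
def CutoffBounds (K : ℝ) (g : ℝ → ℝ) : Prop :=
  ∀ x ∈ Icc (0 : ℝ) 2, |g x| ≤ K * x ∧ |deriv g x| ≤ K ∧ |deriv (deriv g) x| ≤ K

lemma SymbolBounds.nonneg {A : ℝ} {b : ℝ → ℂ} (hbA : SymbolBounds A b) : 0 ≤ A :=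
  (norm_nonneg _).trans (hbA 1 one_pos).1

lemma CutoffBounds.nonneg {K : ℝ} {g : ℝ → ℝ} (hgK : CutoffBounds K g) : 0 ≤ K :=
  (abs_nonneg _).trans (hgK 0 (left_mem_Icc.mpr zero_le_two)).2.1

lemma exists_cutoffBounds {g : ℝ → ℝ} (hg : ContDiff ℝ 2 g) (hg0 : g 0 = 0) :
    ∃ K > 0, CutoffBounds K g := by
  have hg'' : Continuous (deriv (deriv g)) := (hg.iterate_deriv' 0 2).continuous
  obtain ⟨M₁, hM₁⟩ := (isCompact_Icc : IsCompact (Icc (0 : ℝ) 2)).exists_bound_of_continuousOn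
    (hg.continuous_deriv one_le_two).continuousOn
  obtain ⟨M₂, hM₂⟩ := (isCompact_Icc : IsCompact (Icc (0 : ℝ) 2)).exists_bound_of_continuousOn
    hg''.continuousOn
  have hM₁0 : 0 ≤ M₁ := (norm_nonneg _).trans (hM₁ 0 (left_mem_Icc.mpr zero_le_two))
  have hM₂0 : 0 ≤ M₂ := (norm_nonneg _).trans (hM₂ 0 (left_mem_Icc.mpr zero_le_two))
  refine ⟨M₁ + M₂ + 1, by positivity, fun x hx => ⟨?_, ?_, ?_⟩⟩
  · have h := (convex_Icc (0 : ℝ) 2).norm_image_sub_le_of_norm_deriv_le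
      (fun y _ => (hg.differentiable two_ne_zero).differentiableAt) hM₁
      (left_mem_Icc.mpr zero_le_two) hx
    rw [hg0, sub_zero, sub_zero, Real.norm_eq_abs, Real.norm_eq_abs, abs_of_nonneg hx.1] at h
    nlinarith [hx.1]
  · have := hM₁ x hx; rw [Real.norm_eq_abs] at this; linarith
  · have := hM₂ x hx; rw [Real.norm_eq_abs] at this; linarith

section Amplitude

variable {g : ℝ → ℝ} {b : ℝ → ℂ} {K A x : ℝ}

lemma hasDerivAt_ofReal_mul (hg : DifferentiableAt ℝ g x) (hb : DifferentiableAt ℝ b x) :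
    HasDerivAt (fun l => (g l : ℂ) * b l) (((deriv g x : ℝ) : ℂ) * b x + g x * deriv b x) x :=
  hg.hasDerivAt.ofReal_comp.mul hb.hasDerivAt

lemma hasDerivAt_deriv_ofReal_mul (hg : ContDiff ℝ 2 g) (hb : ContDiffOn ℝ 2 b (Ioi 0))
    (hx : 0 < x) :
    HasDerivAt (fun l => ((deriv g l : ℝ) : ℂ) * b l + g l * deriv b l)
      (((deriv (deriv g) x : ℝ) : ℂ) * b x + 2 * ((deriv g x : ℝ) : ℂ) * deriv b x +
        g x * deriv (deriv b) x) x := by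
  have hb' : ContDiffOn ℝ 1 (deriv b) (Ioi 0) := hb.deriv_of_isOpen isOpen_Ioi (by norm_num)
  have hg' : Differentiable ℝ (deriv g) := (hg.iterate_deriv' 1 1).differentiable one_ne_zero
  have hx' := isOpen_Ioi.mem_nhds (mem_Ioi.mpr hx)
  refine ((hasDerivAt_ofReal_mul (hg' x)
    ((hb.differentiableOn two_ne_zero).differentiableAt hx')).add
    (hasDerivAt_ofReal_mul (hg.differentiable two_ne_zero x)
      ((hb'.differentiableOn one_ne_zero).differentiableAt hx'))).congr_deriv ?_
  ring

lemma continuousOn_deriv_two_ofReal_mul (hg : ContDiff ℝ 2 g) (hb : ContDiffOn ℝ 2 b (Ioi 0)) :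
    ContinuousOn (fun x => ((deriv (deriv g) x : ℝ) : ℂ) * b x +
      2 * ((deriv g x : ℝ) : ℂ) * deriv b x + g x * deriv (deriv b) x) (Ioi 0) := by
  have hb' : ContDiffOn ℝ 1 (deriv b) (Ioi 0) := hb.deriv_of_isOpen isOpen_Ioi (by norm_num)
  have : Continuous (deriv (deriv g)) := (hg.iterate_deriv' 0 2).continuous
  have := hg.continuous_deriv one_le_two
  have := hg.continuous
  have := hb.continuousOn
  have := hb'.continuousOn
  have := hb'.continuousOn_deriv_of_isOpen isOpen_Ioi le_rfl
  fun_prop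

lemma norm_ofReal_mul_le (hgK : CutoffBounds K g) (hbA : SymbolBounds A b) (hx : x ∈ Ioc 0 2) :
    ‖(g x : ℂ) * b x‖ ≤ K * A * x := by
  obtain ⟨hg, -, -⟩ := hgK x (Ioc_subset_Icc_self hx)
  obtain ⟨hb, -, -⟩ := hbA x hx.1
  rw [norm_mul, norm_real, Real.norm_eq_abs]
  calc |g x| * ‖b x‖ ≤ (K * x) * A := by gcongr; exact (abs_nonneg _).trans hg
    _ = K * A * x := by ring

lemma norm_cexp_mul_ofReal_mul_le (s : ℝ) (hgK : CutoffBounds K g) (hbA : SymbolBounds A b)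
    (hx : x ∈ Ioc 0 2) : ‖cexp (I * x * s) * (g x * b x)‖ ≤ K * A * x := by
  rw [norm_mul, norm_cexp_I_mul_mul, one_mul]
  exact norm_ofReal_mul_le hgK hbA hx

lemma norm_deriv_ofReal_mul_le (hgK : CutoffBounds K g) (hbA : SymbolBounds A b)
    (hx : x ∈ Ioc 0 2) :
    ‖((deriv g x : ℝ) : ℂ) * b x + g x * deriv b x‖ ≤ 2 * K * A := by
  obtain ⟨hg, hg', -⟩ := hgK x (Ioc_subset_Icc_self hx)
  obtain ⟨hb, hb', -⟩ := hbA x hx.1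
  have hK := hgK.nonneg
  have hKx : 0 ≤ K * x := (abs_nonneg _).trans hg
  have hx0 : x ≠ 0 := hx.1.ne'
  refine (norm_add_le _ _).trans ?_
  simp only [norm_mul, norm_real, Real.norm_eq_abs]
  calc |deriv g x| * ‖b x‖ + |g x| * ‖deriv b x‖ ≤ K * A + (K * x) * (A / x) := by
        gcongr
    _ = 2 * K * A := by field_simp; ring

lemma norm_deriv_two_ofReal_mul_le (hgK : CutoffBounds K g) (hbA : SymbolBounds A b)
    (hx : x ∈ Ioc 0 2) :
    ‖((deriv (deriv g) x : ℝ) : ℂ) * b x + 2 * ((deriv g x : ℝ) : ℂ) * deriv b x +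
      g x * deriv (deriv b) x‖ ≤ 5 * K * A / x := by
  obtain ⟨hg, hg', hg''⟩ := hgK x (Ioc_subset_Icc_self hx)
  obtain ⟨hb, hb', hb''⟩ := hbA x hx.1
  have hK := hgK.nonneg
  have hA := hbA.nonneg
  have hx0 := hx.1
  have h₀ : ‖((deriv (deriv g) x : ℝ) : ℂ) * b x‖ ≤ 2 * (K * A / x) := by
    rw [norm_mul, norm_real, Real.norm_eq_abs, mul_div_assoc', le_div_iff₀ hx0]
    calc |deriv (deriv g) x| * ‖b x‖ * x ≤ K * A * 2 := by gcongr; exact hx.2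
      _ = 2 * (K * A) := by ring
  have h₁ : ‖2 * ((deriv g x : ℝ) : ℂ) * deriv b x‖ ≤ 2 * (K * A / x) := by
    rw [norm_mul, norm_mul, norm_real, Real.norm_eq_abs, Complex.norm_two, mul_assoc,
      mul_div_assoc]
    gcongr
  have h₂ : ‖(g x : ℂ) * deriv (deriv b) x‖ ≤ K * A / x := by
    rw [norm_mul, norm_real, Real.norm_eq_abs]
    calc |g x| * ‖deriv (deriv b) x‖ ≤ (K * x) * (A / x ^ 2) := by gcongr
      _ = K * A / x := by field_simp
  refine norm_add₃_le.trans ?_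
  rw [show 5 * K * A / x = 5 * (K * A / x) by ring]
  linarith

lemma integral_norm_deriv_two_ofReal_mul_le {T : ℝ} (hg : ContDiff ℝ 2 g)
    (hb : ContDiffOn ℝ 2 b (Ioi 0)) (hgK : CutoffBounds K g) (hbA : SymbolBounds A b)
    (hT : T ∈ Ioc 0 2) :
    ∫ x in T..2, ‖((deriv (deriv g) x : ℝ) : ℂ) * b x + 2 * ((deriv g x : ℝ) : ℂ) * deriv b x +
      g x * deriv (deriv b) x‖ ≤ 5 * K * A * Real.log (2 / T) := by
  have hIcc : Icc T 2 ⊆ Ioi 0 := fun x hx => hT.1.trans_le hx.1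
  have h0 : (0 : ℝ) ∉ uIcc T 2 := by
    rw [uIcc_of_le hT.2]; exact fun h => lt_irrefl (0 : ℝ) (hIcc h)
  have hinv : IntervalIntegrable (fun x : ℝ => x⁻¹) volume T 2 :=
    intervalIntegral.intervalIntegrable_inv (fun x hx h => h0 (h ▸ hx)) continuousOn_id
  rw [← integral_inv h0, ← intervalIntegral.integral_const_mul]
  refine intervalIntegral.integral_mono_on hT.2
    (((continuousOn_deriv_two_ofReal_mul hg hb).mono hIcc).norm.intervalIntegrable_of_Icc hT.2)
    (hinv.const_mul _) fun x hx => ?_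
  rw [← div_eq_mul_inv]
  exact norm_deriv_two_ofReal_mul_le hgK hbA ⟨hIcc hx, hx.2⟩

lemma integrableOn_Ioc_cexp_mul_ofReal_mul (s : ℝ) (hg : Continuous g)
    (hgK : CutoffBounds K g) (hb : ContinuousOn b (Ioi 0)) (hbA : SymbolBounds A b) :
    IntegrableOn (fun x : ℝ => cexp (I * x * s) * (g x * b x)) (Ioc 0 2) := by
  have hcont : ContinuousOn (fun x : ℝ => cexp (I * x * s) * (g x * b x)) (Ioi 0) := by
    fun_prop
  have hKA : 0 ≤ K * A := mul_nonneg hgK.nonneg hbA.nonneg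
  refine IntegrableOn.of_bound measure_Ioc_lt_top
    ((hcont.mono Ioc_subset_Ioi_self).aestronglyMeasurable measurableSet_Ioc) (K * A * 2)
    ((ae_restrict_iff' measurableSet_Ioc).mpr (.of_forall fun x hx => ?_))
  exact (norm_cexp_mul_ofReal_mul_le s hgK hbA hx).trans (by gcongr; exact hx.2)

end Amplitude

section Oscillatory

variable {g : ℝ → ℝ} {b : ℝ → ℂ} {K A : ℝ}

theorem norm_integral_cexp_mul_ofReal_mul_le {T s : ℝ} (hg : ContDiff ℝ 2 g)
    (hg_supp : ∀ x, 1 < x → g x = 0) (hgK : CutoffBounds K g) (hb : ContDiffOn ℝ 2 b (Ioi 0))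
    (hbA : SymbolBounds A b) (hT : T ∈ Ioc 0 2) (hs : s ≠ 0) :
    ‖∫ x in T..2, cexp (I * x * s) * (g x * b x)‖ ≤
      K * A * T / |s| + (2 * K * A + 5 * K * A * Real.log (2 / T)) / s ^ 2 := by
  have hIcc : Icc T 2 ⊆ Ioi 0 := fun x hx => hT.1.trans_le hx.1
  have hφ : ∀ x ∈ Icc T 2, HasDerivAt (fun l => (g l : ℂ) * b l)
      (((deriv g x : ℝ) : ℂ) * b x + g x * deriv b x) x := fun x hx =>
    hasDerivAt_ofReal_mul (hg.differentiable two_ne_zero x)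
      ((hb.differentiableOn two_ne_zero).differentiableAt (isOpen_Ioi.mem_nhds (hIcc hx)))
  have hg2 : g 2 = 0 := hg_supp 2 one_lt_two
  have hg2' : deriv g 2 = 0 := by
    have : g =ᶠ[nhds 2] fun _ => 0 := Filter.eventually_of_mem (Ioi_mem_nhds one_lt_two) hg_supp
    rw [this.deriv_eq, deriv_const]
  refine (norm_integral_cexp_mul_le_of_hasDerivAt_two hT.2 hs hφ
    (fun x hx => hasDerivAt_deriv_ofReal_mul hg hb (hIcc hx))
    (((continuousOn_deriv_two_ofReal_mul hg hb).mono hIcc).intervalIntegrable_of_Icc hT.2)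
    (by simp [hg2]) (by simp [hg2, hg2'])).trans ?_
  gcongr
  · exact norm_ofReal_mul_le hgK hbA hT
  · exact norm_deriv_ofReal_mul_le hgK hbA hT
  · exact integral_norm_deriv_two_ofReal_mul_le hg hb hgK hbA hT

theorem norm_setIntegral_Ioc_cexp_mul_ofReal_mul_le {s : ℝ} (hg : ContDiff ℝ 2 g)
    (hg_supp : ∀ x, 1 < x → g x = 0) (hgK : CutoffBounds K g) (hb : ContDiffOn ℝ 2 b (Ioi 0))
    (hbA : SymbolBounds A b) (hs : 1 < |s|) :
    ‖∫ x in Ioc (0 : ℝ) 2, cexp (I * x * s) * (g x * b x)‖ ≤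
      5 * K * A * (1 + Real.log (2 * |s|)) / s ^ 2 := by
  set T := |s|⁻¹
  have hT : T ∈ Ioc 0 2 := ⟨by positivity, (inv_le_one_of_one_le₀ hs.le).trans one_le_two⟩
  have hKA : 0 ≤ K * A := mul_nonneg hgK.nonneg hbA.nonneg
  have hint := integrableOn_Ioc_cexp_mul_ofReal_mul s hg.continuous hgK hb.continuousOn hbA
  rw [← Ioc_union_Ioc_eq_Ioc hT.1.le hT.2, setIntegral_union (Ioc_disjoint_Ioc_of_le le_rfl)
    measurableSet_Ioc (hint.mono_set (Ioc_subset_Ioc_right hT.2))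
    (hint.mono_set (Ioc_subset_Ioc_left hT.1.le)), ← intervalIntegral.integral_of_le hT.2]
  have hlow := norm_setIntegral_Ioc_zero_le hKA hT.1.le fun x hx =>
    norm_cexp_mul_ofReal_mul_le s hgK hbA ⟨hx.1, hx.2.trans hT.2⟩
  have hhigh := norm_integral_cexp_mul_ofReal_mul_le hg hg_supp hgK hb hbA hT
    (abs_pos.mp (one_pos.trans hs))
  have hsum : K * A * T ^ 2 +
      (K * A * T / |s| + (2 * K * A + 5 * K * A * Real.log (2 / T)) / s ^ 2) =
      (4 * K * A + 5 * K * A * Real.log (2 * |s|)) / s ^ 2 := by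
    have hs0 : 0 < |s| := one_pos.trans hs
    rw [div_inv_eq_mul, ← sq_abs s]; simp only [T]; field_simp; ring
  refine (norm_add_le _ _).trans ((add_le_add hlow hhigh).trans_eq hsum |>.trans ?_)
  gcongr
  linarith

theorem norm_setIntegral_Ioi_cexp_mul_ofReal_mul_le (hg : ContDiff ℝ 2 g)
    (hg_supp : ∀ x, 1 < x → g x = 0) (hgK : CutoffBounds K g) (hb : ContDiffOn ℝ 2 b (Ioi 0))
    (hbA : SymbolBounds A b) (s : ℝ) :
    ‖∫ x in Ioi (0 : ℝ), cexp (I * x * s) * (g x * b x)‖ ≤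
      40 * K * A / (1 + |s|) ^ (3 / 2 : ℝ) := by
  have hKA : 0 ≤ K * A := mul_nonneg hgK.nonneg hbA.nonneg
  rw [setIntegral_eq_of_subset_of_forall_sdiff_eq_zero measurableSet_Ioi Ioc_subset_Ioi_self
    fun x hx => by
      have hx2 : 2 < x := not_le.mp fun h => hx.2 ⟨hx.1, h⟩
      simp [hg_supp x (one_lt_two.trans hx2)]]
  rcases le_or_gt |s| 1 with hs | hs
  · calc _ ≤ K * A * 2 ^ 2 := norm_setIntegral_Ioc_zero_le hKA zero_le_two
          fun x hx => norm_cexp_mul_ofReal_mul_le s hgK hbA hx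
      _ ≤ 40 * K * A / (1 + |s|) ^ (3 / 2 : ℝ) := by
          rw [le_div_iff₀ (by positivity)]
          nlinarith [one_add_rpow_three_halves_le_four (abs_nonneg s) hs]
  · have h5KA : 0 ≤ 5 * K * A := by linarith
    calc _ ≤ 5 * K * A * (1 + Real.log (2 * |s|)) / s ^ 2 :=
          norm_setIntegral_Ioc_cexp_mul_ofReal_mul_le hg hg_supp hgK hb hbA hs
      _ = 5 * K * A * ((1 + Real.log (2 * |s|)) / |s| ^ 2) := by rw [sq_abs]; ring
      _ ≤ 5 * K * A * (8 / (1 + |s|) ^ (3 / 2 : ℝ)) :=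
          mul_le_mul_of_nonneg_left (one_add_log_two_mul_div_sq_le hs.le) h5KA
      _ = 40 * K * A / (1 + |s|) ^ (3 / 2 : ℝ) := by ring

end Oscillatory

theorem stmt12_general (χ : ℝ → ℝ) (hχ : ContDiff ℝ 2 χ)
    (hχsupp : Function.support χ ⊆ Set.Icc (-1) 1) :
    ∃ C > 0, ∀ A > 0, ∀ b : ℝ → ℂ, ContDiffOn ℝ 2 b (Set.Ioi 0) →
      (∀ l : ℝ, 0 < l → ‖b l‖ ≤ A) →
      (∀ l : ℝ, 0 < l → ‖deriv b l‖ ≤ A / l) →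
      (∀ l : ℝ, 0 < l → ‖deriv (deriv b) l‖ ≤ A / l ^ 2) →
      ∀ s : ℝ,
        ‖∫ l in Set.Ioi (0:ℝ),
            Complex.exp (Complex.I * (l : ℂ) * (s : ℂ)) * (l : ℂ) * (χ l : ℂ) * b l‖
          ≤ C * A / (1 + |s|) ^ ((3:ℝ)/2) := by
  have hg : ContDiff ℝ 2 fun l => l * χ l := contDiff_id.mul hχ
  have hg_supp : ∀ x : ℝ, 1 < x → x * χ x = 0 := fun x hx => by
    rw [Function.notMem_support.mp fun h => (hχsupp h).2.not_gt hx, mul_zero]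
  obtain ⟨K, hK, hgK⟩ := exists_cutoffBounds hg (zero_mul _)
  refine ⟨40 * K, by positivity, fun A _ b hb hb₀ hb₁ hb₂ s => ?_⟩
  have := norm_setIntegral_Ioi_cexp_mul_ofReal_mul_le hg hg_supp hgK hb
    (fun l hl => ⟨hb₀ l hl, hb₁ l hl, hb₂ l hl⟩) s
  simpa only [ofReal_mul, ← mul_assoc] using this

/-- Dyadic decomposition estimate (Proposition for `T_{K⁰₄}`): if the amplitude `b` satisfies
`|b| ≤ A`, `|b'| ≤ A λ⁻¹`, `|b''| ≤ A λ⁻²` on `(0,∞)`, then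
`|∫₀^∞ e^{iλs} λ χ(λ) b(λ) dλ| ≤ C A (1+|s|)^{-3/2}`. -/
theorem stmt12 (χ : ℝ → ℝ) (hχ : ContDiff ℝ 2 χ)
    (hχsupp : Function.support χ ⊆ Set.Icc (-1) 1)
    (hχone : ∀ x ∈ Set.Icc (-(1:ℝ)/2) (1/2), χ x = 1)
    (hχbd : ∀ x : ℝ, 0 ≤ χ x ∧ χ x ≤ 1) :
    ∃ C > 0, ∀ A > 0, ∀ b : ℝ → ℂ, ContDiffOn ℝ 2 b (Set.Ioi 0) →
      (∀ l : ℝ, 0 < l → ‖b l‖ ≤ A) →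
      (∀ l : ℝ, 0 < l → ‖deriv b l‖ ≤ A / l) →
      (∀ l : ℝ, 0 < l → ‖deriv (deriv b) l‖ ≤ A / l ^ 2) →
      ∀ s : ℝ,
        ‖∫ l in Set.Ioi (0:ℝ),
            Complex.exp (Complex.I * (l : ℂ) * (s : ℂ)) * (l : ℂ) * (χ l : ℂ) * b l‖
          ≤ C * A / (1 + |s|) ^ ((3:ℝ)/2) :=
  stmt12_general χ hχ hχsupp
end

section
/- Define K : ℝ × ℝ → ℝ by K(x,y) = x/(x²+y²) if |x−y| ≥ 1 and K(x,y) = 0 otherwise. Then there exists a constant C > 0 such that for every f ∈ L²(ℝ) the integral (T f)(x) = ∫_ℝ K(x,y) f(y) dy converges absolutely for almost every x ∈ ℝ and ‖T f‖_{L²(ℝ)} ≤ C·‖f‖_{L²(ℝ)}. -/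
/-!
Since `|K x y| ≤ |x| / (x² + y²)`, a kernel homogeneous of degree `-1`, Schur's test with the
weight `w t = |t| ^ (-1/2)` applies: both `∫ |x| / (x² + y²) w y dy` and `∫ |x| / (x² + y²) w x dx`
are at most `16/3` times the weight at the other variable, which follows from
`∫ |t| ^ p / (t² + a²) dt ≤ 2 (1 / (p + 1) + 1 / (1 - p)) a ^ (p - 1)` (split the integral at
`|t| = a`). Schur's test itself is Cauchy–Schwarz, `(∫ k F)² ≤ (∫ k w) (∫ k F² / w)`,
followed by Tonelli.
-/

open MeasureTheory Set Function
open scoped ENNReal NNReal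

theorem lintegral_comp_abs (f : ℝ → ℝ≥0∞) : ∫⁻ x, f |x| = 2 * ∫⁻ x in Ioi 0, f x := by
  have h_pos : ∫⁻ x in Ioi 0, f |x| = ∫⁻ x in Ioi 0, f x :=
    setLIntegral_congr_fun measurableSet_Ioi fun x hx => by rw [abs_of_pos hx]
  have h_neg : ∫⁻ x in Iic 0, f |x| = ∫⁻ x in Ioi 0, f x := by
    have := (Measure.measurePreserving_neg (volume : Measure ℝ)).setLIntegral_comp_emb
      measurableEmbedding_neg (fun x => f |x|) (Ici 0)
    simp only [abs_neg, image_neg_Ici, neg_zero] at this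
    rw [← this, setLIntegral_congr Ioi_ae_eq_Ici.symm]
    exact setLIntegral_congr_fun measurableSet_Ioi fun x hx => by rw [abs_of_pos hx]
  rw [← lintegral_add_compl _ measurableSet_Ioi, compl_Ioi, h_pos, h_neg, two_mul]

theorem lintegral_Ioc_rpow_div_sq_add_sq_le {p a : ℝ} (hp : -1 < p) (ha : 0 < a) :
    ∫⁻ t in Ioc 0 a, ENNReal.ofReal (t ^ p / (t ^ 2 + a ^ 2)) ≤
      ENNReal.ofReal (a ^ (p - 1) / (p + 1)) := by
  have h_int : IntegrableOn (fun t : ℝ => t ^ p / a ^ 2) (Ioc 0 a) := by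
    have := intervalIntegral.intervalIntegrable_rpow' (a := 0) (b := a) hp
    exact ((intervalIntegrable_iff_integrableOn_Ioc_of_le ha.le).mp this).div_const _
  calc ∫⁻ t in Ioc 0 a, ENNReal.ofReal (t ^ p / (t ^ 2 + a ^ 2))
      ≤ ∫⁻ t in Ioc 0 a, ENNReal.ofReal (t ^ p / a ^ 2) := by
        refine setLIntegral_mono' measurableSet_Ioc fun t ht => ENNReal.ofReal_le_ofReal ?_
        gcongr
        · exact Real.rpow_nonneg ht.1.le p
        · nlinarith
    _ = ENNReal.ofReal (∫ t in Ioc 0 a, t ^ p / a ^ 2) :=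
        (ofReal_integral_eq_lintegral_ofReal h_int <| (ae_restrict_mem measurableSet_Ioc).mono
          fun t ht => div_nonneg (Real.rpow_nonneg ht.1.le p) (sq_nonneg a)).symm
    _ = ENNReal.ofReal (a ^ (p - 1) / (p + 1)) := by
        have hp' : p + 1 ≠ 0 := by linarith
        rw [integral_div, ← intervalIntegral.integral_of_le ha.le, integral_rpow (.inl hp),
          Real.zero_rpow hp', sub_zero, show p + 1 = p - 1 + 2 by ring,
          Real.rpow_add ha, Real.rpow_two]
        congr 1
        field_simp

theorem lintegral_Ioi_rpow_div_sq_add_sq_le {p a : ℝ} (hp : p < 1) (ha : 0 < a) :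
    ∫⁻ t in Ioi a, ENNReal.ofReal (t ^ p / (t ^ 2 + a ^ 2)) ≤
      ENNReal.ofReal (a ^ (p - 1) / (1 - p)) := by
  calc ∫⁻ t in Ioi a, ENNReal.ofReal (t ^ p / (t ^ 2 + a ^ 2))
      ≤ ∫⁻ t in Ioi a, ENNReal.ofReal (t ^ (p - 2)) := by
        refine setLIntegral_mono' measurableSet_Ioi fun t ht => ENNReal.ofReal_le_ofReal ?_
        have ht0 : 0 < t := ha.trans ht
        rw [Real.rpow_sub ht0, Real.rpow_two]
        gcongr
        exact le_add_of_nonneg_right (sq_nonneg a)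
    _ = ENNReal.ofReal (∫ t in Ioi a, t ^ (p - 2)) :=
        (ofReal_integral_eq_lintegral_ofReal (integrableOn_Ioi_rpow_of_lt (by linarith) ha) <|
          (ae_restrict_mem measurableSet_Ioi).mono fun t ht =>
            Real.rpow_nonneg (ha.trans ht).le _).symm
    _ = ENNReal.ofReal (a ^ (p - 1) / (1 - p)) := by
        rw [integral_Ioi_rpow_of_lt (by linarith) ha, show p - 2 + 1 = p - 1 by ring,
          neg_div, ← div_neg, neg_sub]

theorem lintegral_abs_rpow_div_sq_add_sq_le {p a : ℝ} (hp₁ : -1 < p) (hp₂ : p < 1)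
    (ha : 0 < a) :
    ∫⁻ t, ENNReal.ofReal (|t| ^ p / (t ^ 2 + a ^ 2)) ≤
      ENNReal.ofReal (2 * (1 / (p + 1) + 1 / (1 - p)) * a ^ (p - 1)) := by
  have h_split : Ioi (0 : ℝ) = Ioc 0 a ∪ Ioi a := (Ioc_union_Ioi_eq_Ioi ha.le).symm
  calc ∫⁻ t, ENNReal.ofReal (|t| ^ p / (t ^ 2 + a ^ 2))
      = ∫⁻ t, ENNReal.ofReal (|t| ^ p / (|t| ^ 2 + a ^ 2)) := by simp only [sq_abs]
    _ = 2 * ((∫⁻ t in Ioc 0 a, ENNReal.ofReal (t ^ p / (t ^ 2 + a ^ 2))) +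
          ∫⁻ t in Ioi a, ENNReal.ofReal (t ^ p / (t ^ 2 + a ^ 2))) := by
        rw [lintegral_comp_abs (fun t => ENNReal.ofReal (t ^ p / (t ^ 2 + a ^ 2))), h_split,
          lintegral_union measurableSet_Ioi (Ioc_disjoint_Ioi le_rfl)]
    _ ≤ 2 * (ENNReal.ofReal (a ^ (p - 1) / (p + 1)) +
          ENNReal.ofReal (a ^ (p - 1) / (1 - p))) := by
        gcongr
        exacts [lintegral_Ioc_rpow_div_sq_add_sq_le hp₁ ha,
          lintegral_Ioi_rpow_div_sq_add_sq_le hp₂ ha]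
    _ = ENNReal.ofReal (2 * (1 / (p + 1) + 1 / (1 - p)) * a ^ (p - 1)) := by
        have h_nonneg := Real.rpow_nonneg ha.le (p - 1)
        rw [← ENNReal.ofReal_add (div_nonneg h_nonneg (by linarith))
            (div_nonneg h_nonneg (by linarith)),
          ← ENNReal.ofReal_ofNat 2, ← ENNReal.ofReal_mul (by norm_num)]
        congr 1
        ring

section Schur

variable {α β : Type*} [MeasurableSpace α] [MeasurableSpace β] {μ : Measure α} {ν : Measure β}

theorem sq_lintegral_mul_le_mul_lintegral_sq {f g : α → ℝ≥0∞} (hf : AEMeasurable f μ)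
    (hg : AEMeasurable g μ) :
    (∫⁻ a, f a * g a ∂μ) ^ 2 ≤ (∫⁻ a, f a ^ 2 ∂μ) * ∫⁻ a, g a ^ 2 ∂μ := by
  have h := ENNReal.lintegral_mul_le_Lp_mul_Lq μ Real.HolderConjugate.two_two hf hg
  simp only [ENNReal.rpow_two, Pi.mul_apply] at h
  calc (∫⁻ a, f a * g a ∂μ) ^ 2
      ≤ ((∫⁻ a, f a ^ 2 ∂μ) ^ (1 / 2 : ℝ) * (∫⁻ a, g a ^ 2 ∂μ) ^ (1 / 2 : ℝ)) ^ 2 := by gcongr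
    _ = (∫⁻ a, f a ^ 2 ∂μ) * ∫⁻ a, g a ^ 2 ∂μ := by
        simp only [mul_pow, ← ENNReal.rpow_natCast, ← ENNReal.rpow_mul]
        norm_num

theorem sq_lintegral_mul_le_weighted {f g w : α → ℝ≥0∞}
    (hf : AEMeasurable f μ) (hg : AEMeasurable g μ) (hw : AEMeasurable w μ)
    (hw₀ : ∀ᵐ a ∂μ, w a ≠ 0) (hw_top : ∀ᵐ a ∂μ, w a ≠ ∞) :
    (∫⁻ a, f a * g a ∂μ) ^ 2 ≤ (∫⁻ a, f a * w a ∂μ) * ∫⁻ a, f a * g a ^ 2 / w a ∂μ := by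
  set u : α → ℝ≥0∞ := fun a => (f a * w a) ^ (1 / 2 : ℝ)
  set v : α → ℝ≥0∞ := fun a => (f a * g a ^ 2 / w a) ^ (1 / 2 : ℝ)
  have h_sq : ∀ c : ℝ≥0∞, (c ^ (1 / 2 : ℝ)) ^ 2 = c := fun c => by
    rw [← ENNReal.rpow_natCast, ← ENNReal.rpow_mul]; norm_num
  have h_uv : ∀ᵐ a ∂μ, f a * g a = u a * v a := by
    filter_upwards [hw₀, hw_top] with a h₀ h_top
    calc f a * g a = ((f a * g a) ^ 2) ^ (1 / 2 : ℝ) := by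
          rw [← ENNReal.rpow_natCast, ← ENNReal.rpow_mul]; norm_num
      _ = u a * v a := by
          simp only [u, v]
          rw [← ENNReal.mul_rpow_of_nonneg _ _ (by norm_num), mul_div_assoc, mul_mul_mul_comm,
            ENNReal.mul_div_cancel h₀ h_top]
          congr 1
          ring
  calc (∫⁻ a, f a * g a ∂μ) ^ 2 = (∫⁻ a, u a * v a ∂μ) ^ 2 := by rw [lintegral_congr_ae h_uv]
    _ ≤ (∫⁻ a, u a ^ 2 ∂μ) * ∫⁻ a, v a ^ 2 ∂μ :=
        sq_lintegral_mul_le_mul_lintegral_sq ((hf.mul hw).pow_const _)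
          (((hf.mul (hg.pow_const 2)).div hw).pow_const _)
    _ = (∫⁻ a, f a * w a ∂μ) * ∫⁻ a, f a * g a ^ 2 / w a ∂μ := by simp only [u, v, h_sq]

theorem lintegral_sq_lintegral_mul_le_of_schur [SFinite μ] [SFinite ν] {k : α → β → ℝ≥0∞}
    (hk : Measurable (uncurry k)) {p : β → ℝ≥0∞} {q : α → ℝ≥0∞} (hp : Measurable p)
    (hq : Measurable q) (hp₀ : ∀ᵐ y ∂ν, p y ≠ 0) (hp_top : ∀ᵐ y ∂ν, p y ≠ ∞) {A B : ℝ≥0∞}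
    (hA : ∀ᵐ x ∂μ, ∫⁻ y, k x y * p y ∂ν ≤ A * q x)
    (hB : ∀ᵐ y ∂ν, ∫⁻ x, k x y * q x ∂μ ≤ B * p y) {F : β → ℝ≥0∞} (hF : AEMeasurable F ν) :
    ∫⁻ x, (∫⁻ y, k x y * F y ∂ν) ^ 2 ∂μ ≤ A * B * ∫⁻ y, F y ^ 2 ∂ν := by
  set G : β → ℝ≥0∞ := fun y => F y ^ 2 / p y
  have hG : AEMeasurable G ν := (hF.pow_const 2).div hp.aemeasurable
  have hk_left : ∀ x, Measurable (k x) := fun x => hk.comp measurable_prodMk_left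
  have hk_right : ∀ y, Measurable (k · y) := fun y => hk.comp measurable_prodMk_right
  have hqkG : AEMeasurable (fun z : α × β => q z.1 * (k z.1 z.2 * G z.2)) (μ.prod ν) :=
    (hq.comp measurable_fst).aemeasurable.mul (hk.aemeasurable.mul hG.comp_snd)
  calc ∫⁻ x, (∫⁻ y, k x y * F y ∂ν) ^ 2 ∂μ
      ≤ ∫⁻ x, A * (q x * ∫⁻ y, k x y * G y ∂ν) ∂μ := by
        refine lintegral_mono_ae (hA.mono fun x hx => ?_)
        refine (sq_lintegral_mul_le_weighted (hk_left x).aemeasurable hF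
          hp.aemeasurable hp₀ hp_top).trans ?_
        rw [← mul_assoc]
        simp only [G, mul_div_assoc]
        gcongr
    _ = A * ∫⁻ x, ∫⁻ y, q x * (k x y * G y) ∂ν ∂μ := by
        rw [← lintegral_const_mul'' A hqkG.lintegral_prod_right']
        refine lintegral_congr fun x => ?_
        rw [← lintegral_const_mul'' (f := fun y => k x y * G y) _ ((hk_left x).aemeasurable.mul hG)]
    _ = A * ∫⁻ y, (∫⁻ x, k x y * q x ∂μ) * G y ∂ν := by
        rw [lintegral_lintegral_swap hqkG]
        refine congrArg (A * ·) (lintegral_congr fun y => ?_)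
        rw [← lintegral_mul_const'' (f := fun x => k x y * q x) _
          ((hk_right y).mul hq).aemeasurable]
        exact lintegral_congr fun x => by ring
    _ ≤ A * ∫⁻ y, B * p y * G y ∂ν := by
        gcongr A * ?_
        exact lintegral_mono_ae (hB.mono fun y hy => by gcongr)
    _ = A * B * ∫⁻ y, F y ^ 2 ∂ν := by
        rw [mul_assoc, ← lintegral_const_mul'' B (hF.pow_const 2)]
        congr 1
        refine lintegral_congr_ae ?_
        filter_upwards [hp₀, hp_top] with y h₀ h_top
        rw [mul_assoc, ENNReal.mul_div_cancel h₀ h_top]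

theorem sq_eLpNorm_two_eq_lintegral {ε : Type*} [TopologicalSpace ε] [ContinuousENorm ε]
    (f : α → ε) :
    eLpNorm f 2 μ ^ 2 = ∫⁻ a, ‖f a‖ₑ ^ 2 ∂μ := by
  simpa [ENNReal.rpow_two] using eLpNorm_nnreal_pow_eq_lintegral (μ := μ) (f := f) two_ne_zero

variable {𝕜 : Type*} [RCLike 𝕜] [SFinite μ] [SFinite ν] {k : α → β → 𝕜}
  {p : β → ℝ≥0∞} {q : α → ℝ≥0∞} {A B : ℝ≥0} {f : β → 𝕜}

theorem lintegral_sq_lintegral_enorm_kernel_mul_le_of_schur (hk : Measurable (uncurry k))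
    (hp : Measurable p) (hq : Measurable q) (hp₀ : ∀ᵐ y ∂ν, p y ≠ 0) (hp_top : ∀ᵐ y ∂ν, p y ≠ ∞)
    (hA : ∀ᵐ x ∂μ, ∫⁻ y, ‖k x y‖ₑ * p y ∂ν ≤ A * q x)
    (hB : ∀ᵐ y ∂ν, ∫⁻ x, ‖k x y‖ₑ * q x ∂μ ≤ B * p y) (hf : AEStronglyMeasurable f ν) :
    ∫⁻ x, (∫⁻ y, ‖k x y * f y‖ₑ ∂ν) ^ 2 ∂μ ≤ (NNReal.sqrt (A * B) * eLpNorm f 2 ν) ^ 2 := by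
  simp only [enorm_mul]
  rw [mul_pow, ← ENNReal.coe_pow, NNReal.sq_sqrt, ENNReal.coe_mul, sq_eLpNorm_two_eq_lintegral]
  exact lintegral_sq_lintegral_mul_le_of_schur hk.enorm hp hq hp₀ hp_top hA hB hf.enorm

theorem ae_integrable_kernel_mul_of_schur (hk : Measurable (uncurry k))
    (hp : Measurable p) (hq : Measurable q) (hp₀ : ∀ᵐ y ∂ν, p y ≠ 0) (hp_top : ∀ᵐ y ∂ν, p y ≠ ∞)
    (hA : ∀ᵐ x ∂μ, ∫⁻ y, ‖k x y‖ₑ * p y ∂ν ≤ A * q x)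
    (hB : ∀ᵐ y ∂ν, ∫⁻ x, ‖k x y‖ₑ * q x ∂μ ≤ B * p y) (hf : MemLp f 2 ν) :
    ∀ᵐ x ∂μ, Integrable (fun y => k x y * f y) ν := by
  have h_fin : ∫⁻ x, (∫⁻ y, ‖k x y * f y‖ₑ ∂ν) ^ 2 ∂μ ≠ ∞ :=
    ((lintegral_sq_lintegral_enorm_kernel_mul_le_of_schur hk hp hq hp₀ hp_top hA hB
      hf.aestronglyMeasurable).trans_lt
        (ENNReal.pow_lt_top (ENNReal.mul_lt_top ENNReal.coe_lt_top hf.eLpNorm_lt_top))).ne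
  have h_meas : AEMeasurable (fun x => (∫⁻ y, ‖k x y * f y‖ₑ ∂ν) ^ 2) μ :=
    ((hk.aestronglyMeasurable.mul hf.aestronglyMeasurable.comp_snd).enorm.lintegral_prod_right'
      ).pow_const 2
  filter_upwards [ae_lt_top' h_meas h_fin] with x hx
  exact ⟨(hk.comp measurable_prodMk_left).aestronglyMeasurable.mul hf.aestronglyMeasurable,
    (ENNReal.pow_lt_top_iff.mp hx).resolve_right two_ne_zero⟩

theorem eLpNorm_integral_kernel_mul_le_of_schur (hk : Measurable (uncurry k))
    (hp : Measurable p) (hq : Measurable q) (hp₀ : ∀ᵐ y ∂ν, p y ≠ 0) (hp_top : ∀ᵐ y ∂ν, p y ≠ ∞)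
    (hA : ∀ᵐ x ∂μ, ∫⁻ y, ‖k x y‖ₑ * p y ∂ν ≤ A * q x)
    (hB : ∀ᵐ y ∂ν, ∫⁻ x, ‖k x y‖ₑ * q x ∂μ ≤ B * p y) (hf : AEStronglyMeasurable f ν) :
    eLpNorm (fun x => ∫ y, k x y * f y ∂ν) 2 μ ≤ NNReal.sqrt (A * B) * eLpNorm f 2 ν := by
  rw [← ENNReal.pow_le_pow_left_iff two_ne_zero, sq_eLpNorm_two_eq_lintegral]
  refine le_trans ?_
    (lintegral_sq_lintegral_enorm_kernel_mul_le_of_schur hk hp hq hp₀ hp_top hA hB hf)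
  gcongr with x
  exact enorm_integral_le_lintegral_enorm _

end Schur

theorem lintegral_abs_div_sq_add_sq_mul_weight_snd_le (x : ℝ) :
    ∫⁻ y, ENNReal.ofReal (|x| / (x ^ 2 + y ^ 2)) * ENNReal.ofReal (|y| ^ (-(1 / 2) : ℝ)) ≤
      ENNReal.ofReal (16 / 3) * ENNReal.ofReal (|x| ^ (-(1 / 2) : ℝ)) := by
  rcases eq_or_ne x 0 with rfl | hx
  · simp
  have hx' : 0 < |x| := abs_pos.2 hx
  have h_pow : |x| ^ (-(1 / 2) : ℝ) = |x| ^ (-(1 / 2) - 1 : ℝ) * |x| := by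
    rw [← Real.rpow_add_one hx'.ne', sub_add_cancel]
  calc ∫⁻ y, ENNReal.ofReal (|x| / (x ^ 2 + y ^ 2)) * ENNReal.ofReal (|y| ^ (-(1 / 2) : ℝ))
      = ∫⁻ y, ENNReal.ofReal |x| *
          ENNReal.ofReal (|y| ^ (-(1 / 2) : ℝ) / (y ^ 2 + |x| ^ 2)) := by
        refine lintegral_congr fun y => ?_
        rw [← ENNReal.ofReal_mul (by positivity), ← ENNReal.ofReal_mul hx'.le, sq_abs]
        congr 1
        ring
    _ = ENNReal.ofReal |x| *
          ∫⁻ y, ENNReal.ofReal (|y| ^ (-(1 / 2) : ℝ) / (y ^ 2 + |x| ^ 2)) :=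
        lintegral_const_mul _ (by fun_prop)
    _ ≤ ENNReal.ofReal |x| * ENNReal.ofReal
          (2 * (1 / (-(1 / 2) + 1) + 1 / (1 - -(1 / 2))) * |x| ^ (-(1 / 2) - 1 : ℝ)) := by
        gcongr
        exact lintegral_abs_rpow_div_sq_add_sq_le (by norm_num) (by norm_num) hx'
    _ = ENNReal.ofReal (16 / 3) * ENNReal.ofReal (|x| ^ (-(1 / 2) : ℝ)) := by
        rw [← ENNReal.ofReal_mul hx'.le, ← ENNReal.ofReal_mul (by norm_num), h_pow]
        ring_nf

theorem lintegral_abs_div_sq_add_sq_mul_weight_fst_le {y : ℝ} (hy : y ≠ 0) :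
    ∫⁻ x, ENNReal.ofReal (|x| / (x ^ 2 + y ^ 2)) * ENNReal.ofReal (|x| ^ (-(1 / 2) : ℝ)) ≤
      ENNReal.ofReal (16 / 3) * ENNReal.ofReal (|y| ^ (-(1 / 2) : ℝ)) := by
  calc ∫⁻ x, ENNReal.ofReal (|x| / (x ^ 2 + y ^ 2)) * ENNReal.ofReal (|x| ^ (-(1 / 2) : ℝ))
      = ∫⁻ x, ENNReal.ofReal (|x| ^ (1 / 2 : ℝ) / (x ^ 2 + |y| ^ 2)) := by
        refine lintegral_congr fun x => ?_
        have h_pow : |x| ^ (1 / 2 : ℝ) = |x| ^ (-(1 / 2) : ℝ) * |x| := by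
          rw [← Real.rpow_add_one' (abs_nonneg x) (by norm_num)]
          norm_num
        rw [← ENNReal.ofReal_mul (by positivity), sq_abs, h_pow]
        congr 1
        ring
    _ ≤ ENNReal.ofReal (2 * (1 / (1 / 2 + 1) + 1 / (1 - 1 / 2)) * |y| ^ (1 / 2 - 1 : ℝ)) :=
        lintegral_abs_rpow_div_sq_add_sq_le (by norm_num) (by norm_num) (abs_pos.2 hy)
    _ = ENNReal.ofReal (16 / 3) * ENNReal.ofReal (|y| ^ (-(1 / 2) : ℝ)) := by
        rw [← ENNReal.ofReal_mul (by norm_num)]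
        norm_num

theorem measurable_truncated_kernel :
    Measurable (uncurry fun x y : ℝ => if 1 ≤ |x - y| then x / (x ^ 2 + y ^ 2) else 0) :=
  Measurable.ite (measurableSet_le measurable_const (by fun_prop)) (by fun_prop) measurable_const

theorem enorm_truncated_kernel_le (x y : ℝ) :
    ‖if 1 ≤ |x - y| then x / (x ^ 2 + y ^ 2) else 0‖ₑ ≤
      ENNReal.ofReal (|x| / (x ^ 2 + y ^ 2)) := by
  rw [Real.enorm_eq_ofReal_abs]
  refine ENNReal.ofReal_le_ofReal ?_
  split_ifs
  · rw [abs_div, abs_of_nonneg (a := x ^ 2 + y ^ 2) (by positivity)]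
  · simp only [abs_zero]; positivity

/-- `L²`-boundedness of the truncated kernel `x/(x²+y²)` (from the proof of Lemma 2.3). -/
theorem stmt14 (K : ℝ → ℝ → ℝ)
    (hK : K = fun x y => if 1 ≤ |x - y| then x / (x ^ 2 + y ^ 2) else 0) :
    ∃ C > 0, ∀ f : ℝ → ℝ, MemLp f 2 volume →
      (∀ᵐ x : ℝ, Integrable (fun y : ℝ => K x y * f y)) ∧
      eLpNorm (fun x : ℝ => ∫ y : ℝ, K x y * f y) 2 volume
        ≤ ENNReal.ofReal C * eLpNorm f 2 volume := by
  subst hK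
  set w : ℝ → ℝ≥0∞ := fun t => ENNReal.ofReal (|t| ^ (-(1 / 2) : ℝ))
  have hw : Measurable w := by fun_prop
  have hw₀ : ∀ᵐ t, w t ≠ 0 := (Measure.ae_ne volume 0).mono fun t ht => by
    simpa [w] using Real.rpow_pos_of_pos (abs_pos.2 ht) _
  have hw_top : ∀ᵐ t, w t ≠ ∞ := ae_of_all _ fun _ => ENNReal.ofReal_ne_top
  have hA : ∀ᵐ x, ∫⁻ y, ‖if 1 ≤ |x - y| then x / (x ^ 2 + y ^ 2) else 0‖ₑ * w y ≤
      (16 / 3 : ℝ).toNNReal * w x := ae_of_all _ fun x =>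
    (lintegral_mono fun y => by gcongr; exact enorm_truncated_kernel_le x y).trans
      (lintegral_abs_div_sq_add_sq_mul_weight_snd_le x)
  have hB : ∀ᵐ y, ∫⁻ x, ‖if 1 ≤ |x - y| then x / (x ^ 2 + y ^ 2) else 0‖ₑ * w x ≤
      (16 / 3 : ℝ).toNNReal * w y := (Measure.ae_ne volume 0).mono fun y hy =>
    (lintegral_mono fun x => by gcongr; exact enorm_truncated_kernel_le x y).trans
      (lintegral_abs_div_sq_add_sq_mul_weight_fst_le hy)
  -- `ENNReal.ofReal r` is by definition `↑r.toNNReal`.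
  refine ⟨16 / 3, by norm_num, fun f hf => ⟨?_, ?_⟩⟩
  · exact ae_integrable_kernel_mul_of_schur measurable_truncated_kernel hw hw hw₀ hw_top hA hB hf
  · have h := eLpNorm_integral_kernel_mul_le_of_schur measurable_truncated_kernel hw hw hw₀ hw_top
      hA hB hf.aestronglyMeasurable
    rwa [NNReal.sqrt_mul_self] at h
end

section
/- Let χ : ℝ → ℝ be twice continuously differentiable, supported in [−1,1], with χ = 1 on [−1/2,1/2] and 0 ≤ χ ≤ 1. For x, y ∈ ℝ define k(x,y) = sgn(x)·sgn(y)·∫₀^∞ χ(λ)·F₊′(λ|x|)·( F₊′(λ|y|) − F₋′(λ|y|) ) dλ, where F₊′(s) = −e^{is} + e^{−s} and F₋′(s) = −e^{−is} + e^{−s}; the integral converges absolutely. Then there exists a constant C > 0 such that for all x, y ∈ ℝ, |k(x,y) − g(x,y)| ≤ C·(1+(|x|−|y|)²)^{−1}, where g(x,y) = sgn(x)·sgn(y)·[ i·𝟙{|x|+|y| ≥ 1}·(|x|+|y|)^{−1} − i·𝟙{| |x|−|y| | ≥ 1}·(|x|−|y|)^{−1} + 𝟙{| |x|−|y| | ≥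 1}·( (|x|+i|y|)^{−1} − (|x|−i|y|)^{−1} ) ]. -/
open MeasureTheory

/-- `F₊'(s) = -e^{is} + e^{-s}`, the derivative of `F₊(s) = i e^{is} - e^{-s}`. -/
noncomputable def FplusD (s : ℝ) : ℂ :=
  -Complex.exp (Complex.I * (s : ℂ)) + Complex.exp (-(s : ℂ))

/-- `F₋'(s) = -e^{-is} + e^{-s}`, the derivative of `F₋(s) = -i e^{-is} - e^{-s}`. -/
noncomputable def FminusD (s : ℝ) : ℂ :=
  -Complex.exp (-(Complex.I * (s : ℂ))) + Complex.exp (-(s : ℂ))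

/-- The translation-invariant model kernel
`k⁰₁(x,y) = sgn x · sgn y · ∫₀^∞ χ(λ) F₊'(λ|x|) (F₊'(λ|y|) - F₋'(λ|y|)) dλ`. -/
noncomputable def k01 (χ : ℝ → ℝ) (x y : ℝ) : ℂ :=
  (Real.sign x : ℂ) * (Real.sign y : ℂ) *
    ∫ l in Set.Ioi (0:ℝ), (χ l : ℂ) * FplusD (l * |x|) * (FplusD (l * |y|) - FminusD (l * |y|))

/-- The singular part `g₄⁻` of `k⁰₁`. -/
noncomputable def g4minus (x y : ℝ) : ℂ :=
  (Real.sign x : ℂ) * (Real.sign y : ℂ) *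
    (Complex.I * (if 1 ≤ |x| + |y| then ((|x| + |y| : ℝ) : ℂ)⁻¹ else 0)
      - Complex.I * (if 1 ≤ |(|x| - |y|)| then ((|x| - |y| : ℝ) : ℂ)⁻¹ else 0)
      + (if 1 ≤ |(|x| - |y|)| then
            (((|x| : ℝ) : ℂ) + Complex.I * ((|y| : ℝ) : ℂ))⁻¹ -
              (((|x| : ℝ) : ℂ) - Complex.I * ((|y| : ℝ) : ℂ))⁻¹
          else 0))

/-!
Write `a = |x|`, `b = |y|`. Expanding `F₊'(ta) (F₊'(tb) - F₋'(tb))` into exponentials `e^{-st}`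
turns the integral in `k⁰₁` into a signed sum of Laplace transforms `𝓛χ(s)` at
`s = -i(a+b), -i(a-b), a-ib, a+ib`, all in the closed right half-plane. Since `χ ≡ 1` near `0`
and `χ` has compact support, two integrations by parts give `𝓛χ(s) = 1/s + O(|s|⁻²)`, and the
same signed sum of the `1/s` is exactly the bracket of `g₄⁻` once `|a - b| ≥ 1`; there every
`|s| ≥ |a - b|`. Near the diagonal both sides are simply bounded.
-/

open Set Filter Topology

section VanishingBeyond

variable {f : ℝ → ℂ} {T : ℝ}

lemma integrableOn_Ioi_zero_of_eq_zero_of_lt (hf : Continuous f)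
    (hfT : ∀ t, T < t → f t = 0) : IntegrableOn f (Ioi 0) :=
  (hf.integrableOn_Ioc (a := 0) (b := T)).of_forall_sdiff_eq_zero measurableSet_Ioi
    fun t ht => hfT t (not_le.mp fun h => ht.2 ⟨ht.1, h⟩)

lemma setIntegral_Ioi_zero_eq_intervalIntegral (hT : 0 ≤ T) (hfT : ∀ t, T < t → f t = 0) :
    ∫ t in Ioi 0, f t = ∫ t in 0..T, f t := by
  rw [intervalIntegral.integral_of_le hT]
  exact setIntegral_eq_of_subset_of_forall_sdiff_eq_zero measurableSet_Ioi Ioc_subset_Ioi_self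
    fun t ht => hfT t (not_le.mp fun h => ht.2 ⟨ht.1, h⟩)

end VanishingBeyond

section ExponentialIntegrals

variable {s : ℂ} {T : ℝ}

lemma norm_cexp_neg_mul_le_one (hs : 0 ≤ s.re) {t : ℝ} (ht : 0 ≤ t) :
    ‖Complex.exp (-s * t)‖ ≤ 1 := by
  rw [Complex.norm_exp, Real.exp_le_one_iff]
  simpa using mul_nonneg hs ht

lemma norm_intervalIntegral_mul_cexp_le {g : ℝ → ℝ} (hg : Continuous g) (hT : 0 ≤ T)
    (hs : 0 ≤ s.re) :
    ‖∫ t in 0..T, (g t : ℂ) * Complex.exp (-s * t)‖ ≤ ∫ t in 0..T, |g t| := by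
  refine intervalIntegral.norm_integral_le_of_norm_le hT (Eventually.of_forall fun t ht => ?_)
    (hg.abs.intervalIntegrable _ _)
  rw [norm_mul, Complex.norm_real, Real.norm_eq_abs]
  exact mul_le_of_le_one_right (abs_nonneg _) (norm_cexp_neg_mul_le_one hs ht.1.le)

lemma intervalIntegral_mul_cexp_eq {f : ℝ → ℝ} (hf : ContDiff ℝ 2 f)
    (hfT : f T = 0) (hf'T : deriv f T = 0) (hs : s ≠ 0) :
    ∫ t in 0..T, (f t : ℂ) * Complex.exp (-s * t) =
      (f 0 : ℂ) * s⁻¹ + ((deriv f 0 : ℝ) : ℂ) * s⁻¹ ^ 2 +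
        s⁻¹ ^ 2 * ∫ t in 0..T, ((deriv (deriv f) t : ℝ) : ℂ) * Complex.exp (-s * t) := by
  have hprim : ∀ t : ℝ, HasDerivAt (fun t : ℝ => -s⁻¹ * Complex.exp (-s * t))
      (Complex.exp (-s * t)) t := by
    intro t
    convert ((((hasDerivAt_id (t : ℂ)).const_mul (-s)).cexp).const_mul (-s⁻¹)).comp_ofReal
      using 1
    · simp only [id]
    · simp only [id, mul_one]
      field_simp
  have hcexp : Continuous fun t : ℝ => Complex.exp (-s * t) := by fun_prop
  have ibp := fun (u : ℝ → ℝ) (hu : ContDiff ℝ 1 u) =>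
    intervalIntegral.integral_mul_deriv_eq_deriv_mul (a := 0) (b := T)
      (fun t _ => ((hu.differentiable one_ne_zero t).hasDerivAt).ofReal_comp) (fun t _ => hprim t)
      ((Complex.continuous_ofReal.comp (hu.continuous_deriv le_rfl)).intervalIntegrable _ _)
      (hcexp.intervalIntegrable _ _)
  have pull : ∀ u : ℝ → ℝ, ∫ t in 0..T, (u t : ℂ) * (-s⁻¹ * Complex.exp (-s * t)) =
      -s⁻¹ * ∫ t in 0..T, (u t : ℂ) * Complex.exp (-s * t) := fun u => by
    rw [← intervalIntegral.integral_const_mul]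
    congr 1 with t
    ring
  rw [ibp f (hf.of_le (by norm_num)), pull, ibp (deriv f) (hf.iterate_deriv' 1 1), pull]
  simp only [hfT, hf'T, Complex.ofReal_zero, zero_mul, mul_zero, Complex.exp_zero]
  ring

end ExponentialIntegrals

noncomputable def laplaceTransform (f : ℝ → ℝ) (s : ℂ) : ℂ :=
  ∫ t in Ioi 0, (f t : ℂ) * Complex.exp (-s * t)

section LaplaceTransform

variable {f : ℝ → ℝ} {T : ℝ}

lemma integrableOn_laplaceIntegrand (hf : Continuous f) (hfT : ∀ t, T < t → f t = 0) (s : ℂ) :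
    IntegrableOn (fun t : ℝ => (f t : ℂ) * Complex.exp (-s * t)) (Ioi 0) :=
  integrableOn_Ioi_zero_of_eq_zero_of_lt (T := T) (by fun_prop) fun t ht => by simp [hfT t ht]

lemma laplaceTransform_eq_intervalIntegral (hT : 0 ≤ T) (hfT : ∀ t, T < t → f t = 0) (s : ℂ) :
    laplaceTransform f s = ∫ t in 0..T, (f t : ℂ) * Complex.exp (-s * t) :=
  setIntegral_Ioi_zero_eq_intervalIntegral hT fun t ht => by simp [hfT t ht]

lemma norm_laplaceTransform_le (hf : Continuous f) (hT : 0 ≤ T) (hfT : ∀ t, T < t → f t = 0)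
    {s : ℂ} (hs : 0 ≤ s.re) : ‖laplaceTransform f s‖ ≤ ∫ t in 0..T, |f t| := by
  rw [laplaceTransform_eq_intervalIntegral hT hfT]
  exact norm_intervalIntegral_mul_cexp_le hf hT hs

lemma norm_laplaceTransform_sub_inv_le (hf : ContDiff ℝ 2 f) (hf0 : f =ᶠ[𝓝 0] fun _ => 1)
    (hT : 0 ≤ T) (hfT : ∀ t, T < t → f t = 0) {s : ℂ} (hs : 0 ≤ s.re) (hs0 : s ≠ 0) :
    ‖laplaceTransform f s - s⁻¹‖ ≤ (∫ t in 0..T + 1, |deriv (deriv f) t|) / ‖s‖ ^ 2 := by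
  have hfT' : f =ᶠ[𝓝 (T + 1)] fun _ => 0 :=
    eventually_of_mem (Ioi_mem_nhds (by linarith)) fun t ht => hfT t ht
  rw [laplaceTransform_eq_intervalIntegral (T := T + 1) (by linarith)
      fun t ht => hfT t (by linarith),
    intervalIntegral_mul_cexp_eq hf hfT'.eq_of_nhds (by rw [hfT'.deriv_eq, deriv_const]) hs0,
    hf0.eq_of_nhds, hf0.deriv_eq, deriv_const]
  calc ‖(((1 : ℝ) : ℂ) * s⁻¹ + ((0 : ℝ) : ℂ) * s⁻¹ ^ 2 + s⁻¹ ^ 2 *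
          ∫ t in 0..T + 1, ((deriv (deriv f) t : ℝ) : ℂ) * Complex.exp (-s * t)) - s⁻¹‖
      = ‖∫ t in 0..T + 1, ((deriv (deriv f) t : ℝ) : ℂ) * Complex.exp (-s * t)‖ / ‖s‖ ^ 2 := by
        simp [div_eq_inv_mul]
    _ ≤ _ := by
        gcongr
        exact norm_intervalIntegral_mul_cexp_le (hf.iterate_deriv' 0 2).continuous
          (by linarith) hs

end LaplaceTransform

open Complex in
/-- The four exponents `s` in `F₊'(ta) (F₊'(tb) - F₋'(tb)) = Σ ± e^{-st}`, with their signs. -/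
noncomputable def kernelCombination (φ : ℂ → ℂ) (a b : ℝ) : ℂ :=
  φ (-I * (a + b)) - φ (-I * (a - b)) - φ (a - I * b) + φ (a + I * b)

open Complex in
lemma FplusD_mul_sub_FminusD (t a b : ℝ) :
    FplusD (t * a) * (FplusD (t * b) - FminusD (t * b)) =
      kernelCombination (fun s => exp (-s * t)) a b := by
  simp only [FplusD, FminusD, kernelCombination]
  push_cast
  rw [show -(-I * (a + b)) * t = I * (t * a) + I * (t * b) by ring,
    show -(-I * (a - b)) * t = I * (t * a) + -(I * (t * b)) by ring,
    show -(a - I * b) * t = -(t * a : ℂ) + I * (t * b) by ring,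
    show -(a + I * b) * t = -(t * a : ℂ) + -(I * (t * b)) by ring,
    exp_add, exp_add, exp_add, exp_add]
  ring

lemma kernelCombination_sub (φ ψ : ℂ → ℂ) (a b : ℝ) :
    kernelCombination φ a b - kernelCombination ψ a b = kernelCombination (φ - ψ) a b := by
  simp only [kernelCombination, Pi.sub_apply]
  ring

open Complex in
lemma norm_kernelCombination_le {φ : ℂ → ℂ} {a b C : ℝ} (ha : 0 ≤ a) (hb : 0 ≤ b)
    (hφ : ∀ s : ℂ, 0 ≤ s.re → |a - b| ≤ ‖s‖ → ‖φ s‖ ≤ C) :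
    ‖kernelCombination φ a b‖ ≤ 4 * C := by
  have hab : (a - b) ^ 2 ≤ a ^ 2 + b ^ 2 := by nlinarith [mul_nonneg ha hb]
  have h₁ : ‖φ (-I * (a + b))‖ ≤ C := hφ _ (by simp) (by
    rw [norm_mul, norm_neg, norm_I, one_mul, ← ofReal_add, norm_real, Real.norm_eq_abs,
      abs_of_nonneg (add_nonneg ha hb)]
    exact abs_le.mpr ⟨by linarith, by linarith⟩)
  have h₂ : ‖φ (-I * (a - b))‖ ≤ C := hφ _ (by simp) (by
    rw [norm_mul, norm_neg, norm_I, one_mul, ← ofReal_sub, norm_real, Real.norm_eq_abs])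
  have h₃ : ‖φ (a - I * b)‖ ≤ C := hφ _ (by simpa using ha) (by
    refine abs_le_of_sq_le_sq ?_ (norm_nonneg _)
    simpa [Complex.sq_norm, normSq_apply, ← sq] using hab)
  have h₄ : ‖φ (a + I * b)‖ ≤ C := hφ _ (by simpa using ha) (by
    refine abs_le_of_sq_le_sq ?_ (norm_nonneg _)
    simpa [Complex.sq_norm, normSq_apply, ← sq] using hab)
  unfold kernelCombination
  calc _ ≤ ‖φ (-I * (a + b))‖ + ‖φ (-I * (a - b))‖ + ‖φ (a - I * b)‖ + ‖φ (a + I * b)‖ :=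
        (norm_add_le _ _).trans <| by
          gcongr; exact (norm_sub_le _ _).trans (by gcongr; exact norm_sub_le _ _)
    _ ≤ 4 * C := by linarith

section KernelIntegral

variable {f : ℝ → ℝ} {T : ℝ}

lemma kernelIntegrand_eq (a b : ℝ) :
    (fun t : ℝ => (f t : ℂ) * FplusD (t * a) * (FplusD (t * b) - FminusD (t * b))) =
      fun t => kernelCombination (fun s => (f t : ℂ) * Complex.exp (-s * t)) a b := by
  ext t
  rw [mul_assoc, FplusD_mul_sub_FminusD]
  simp only [kernelCombination]
  ring

lemma integrableOn_kernelIntegrand (hf : Continuous f) (hfT : ∀ t, T < t → f t = 0)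
    (a b : ℝ) :
    IntegrableOn (fun t : ℝ => (f t : ℂ) * FplusD (t * a) * (FplusD (t * b) - FminusD (t * b)))
      (Ioi 0) := by
  have h := integrableOn_laplaceIntegrand hf hfT
  rw [kernelIntegrand_eq]
  exact (((h _).sub (h _)).sub (h _)).add (h _)

lemma integral_kernelIntegrand (hf : Continuous f) (hfT : ∀ t, T < t → f t = 0) (a b : ℝ) :
    ∫ t in Ioi 0, (f t : ℂ) * FplusD (t * a) * (FplusD (t * b) - FminusD (t * b)) =
      kernelCombination (laplaceTransform f) a b := by
  have h := integrableOn_laplaceIntegrand hf hfT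
  rw [kernelIntegrand_eq]
  simp only [kernelCombination]
  rw [integral_add ?_ (h _), integral_sub ?_ (h _), integral_sub (h _) (h _)]
  · rfl
  · exact (h _).sub (h _)
  · exact ((h _).sub (h _)).sub (h _)

end KernelIntegral

open Complex in
noncomputable def g4minusProfile (a b : ℝ) : ℂ :=
  I * (if 1 ≤ a + b then ((a + b : ℝ) : ℂ)⁻¹ else 0)
    - I * (if 1 ≤ |a - b| then ((a - b : ℝ) : ℂ)⁻¹ else 0)
    + (if 1 ≤ |a - b| then ((a : ℂ) + I * (b : ℂ))⁻¹ - ((a : ℂ) - I * (b : ℂ))⁻¹ else 0)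

lemma g4minus_eq (x y : ℝ) :
    g4minus x y = Real.sign x * Real.sign y * g4minusProfile |x| |y| := rfl

lemma norm_g4minusProfile_le_one {a b : ℝ} (hab : |a - b| < 1) : ‖g4minusProfile a b‖ ≤ 1 := by
  rw [g4minusProfile, if_neg hab.not_ge, if_neg hab.not_ge]
  split_ifs with h
  · rw [mul_zero, sub_zero, add_zero, norm_mul, Complex.norm_I, one_mul, norm_inv,
      Complex.norm_real, Real.norm_eq_abs, abs_of_nonneg (zero_le_one.trans h)]
    exact inv_le_one_of_one_le₀ h
  · simp

open Complex in
lemma g4minusProfile_eq_kernelCombination_inv {a b : ℝ} (ha : 0 ≤ a) (hb : 0 ≤ b)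
    (hab : 1 ≤ |a - b|) : g4minusProfile a b = kernelCombination (·⁻¹) a b := by
  have hsum : 1 ≤ a + b := hab.trans (abs_le.mpr ⟨by linarith, by linarith⟩)
  rw [g4minusProfile, if_pos hsum, if_pos hab, if_pos hab, kernelCombination]
  push_cast
  simp only [mul_inv, inv_neg, inv_I, neg_neg]
  ring

section KernelEstimate

variable {f : ℝ → ℝ} {T a b : ℝ}

lemma norm_integral_kernelIntegrand_sub_g4minusProfile_le_of_near (hf : Continuous f)
    (hT : 0 ≤ T) (hfT : ∀ t, T < t → f t = 0) (ha : 0 ≤ a) (hb : 0 ≤ b) (hab : |a - b| < 1) :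
    ‖(∫ t in Ioi 0, (f t : ℂ) * FplusD (t * a) * (FplusD (t * b) - FminusD (t * b))) -
        g4minusProfile a b‖ ≤ 4 * (∫ t in 0..T, |f t|) + 1 := by
  rw [integral_kernelIntegrand hf hfT]
  refine (norm_sub_le _ _).trans (add_le_add ?_ (norm_g4minusProfile_le_one hab))
  exact norm_kernelCombination_le ha hb fun s hs _ => norm_laplaceTransform_le hf hT hfT hs

lemma norm_integral_kernelIntegrand_sub_g4minusProfile_le_of_far (hf : ContDiff ℝ 2 f)
    (hf0 : f =ᶠ[𝓝 0] fun _ => 1) (hT : 0 ≤ T) (hfT : ∀ t, T < t → f t = 0)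
    (ha : 0 ≤ a) (hb : 0 ≤ b) (hab : 1 ≤ |a - b|) :
    ‖(∫ t in Ioi 0, (f t : ℂ) * FplusD (t * a) * (FplusD (t * b) - FminusD (t * b))) -
        g4minusProfile a b‖ ≤ 4 * ((∫ t in 0..T + 1, |deriv (deriv f) t|) / (a - b) ^ 2) := by
  rw [integral_kernelIntegrand hf.continuous hfT,
    g4minusProfile_eq_kernelCombination_inv ha hb hab, kernelCombination_sub]
  refine norm_kernelCombination_le ha hb fun s hs hs_ge => ?_
  have hs_pos : 0 < ‖s‖ := zero_lt_one.trans_le (hab.trans hs_ge)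
  refine (norm_laplaceTransform_sub_inv_le hf hf0 hT hfT hs (norm_pos_iff.mp hs_pos)).trans ?_
  refine div_le_div_of_nonneg_left
    (intervalIntegral.integral_nonneg (by linarith) fun t _ => abs_nonneg _)
    (by rw [← sq_abs]; exact pow_pos (zero_lt_one.trans_le hab) 2) ?_
  rw [← sq_abs]
  gcongr

lemma exists_norm_integral_kernelIntegrand_sub_g4minusProfile_le (hf : ContDiff ℝ 2 f)
    (hf0 : f =ᶠ[𝓝 0] fun _ => 1) (hT : 0 ≤ T) (hfT : ∀ t, T < t → f t = 0) :
    ∃ C > 0, ∀ a b : ℝ, 0 ≤ a → 0 ≤ b →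
      ‖(∫ t in Ioi 0, (f t : ℂ) * FplusD (t * a) * (FplusD (t * b) - FminusD (t * b))) -
        g4minusProfile a b‖ ≤ C * (1 + (a - b) ^ 2)⁻¹ := by
  set N₀ := ∫ t in 0..T, |f t|
  set N₂ := ∫ t in 0..T + 1, |deriv (deriv f) t|
  have hN₀ : 0 ≤ N₀ := intervalIntegral.integral_nonneg hT fun t _ => abs_nonneg _
  have hN₂ : 0 ≤ N₂ := intervalIntegral.integral_nonneg (by linarith) fun t _ => abs_nonneg _
  refine ⟨8 * N₀ + 8 * N₂ + 2, by positivity, fun a b ha hb => ?_⟩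
  rw [← div_eq_mul_inv]
  rcases lt_or_ge |a - b| 1 with hab | hab
  · have hsq : (a - b) ^ 2 < 1 := by rw [← sq_abs]; nlinarith [abs_nonneg (a - b)]
    refine (norm_integral_kernelIntegrand_sub_g4minusProfile_le_of_near hf.continuous hT hfT
      ha hb hab).trans ?_
    rw [le_div_iff₀ (by positivity)]
    nlinarith
  · have hsq : 1 ≤ (a - b) ^ 2 := by rw [← sq_abs]; nlinarith
    refine (norm_integral_kernelIntegrand_sub_g4minusProfile_le_of_far hf hf0 hT hfT
      ha hb hab).trans ?_
    rw [mul_div_assoc', div_le_div_iff₀ (by linarith) (by positivity)]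
    nlinarith

end KernelEstimate

lemma norm_real_sign_le_one (r : ℝ) : ‖(Real.sign r : ℂ)‖ ≤ 1 := by
  rcases Real.sign_apply_eq r with h | h | h <;> simp [h]

theorem stmt16_general (χ : ℝ → ℝ) (hχ : ContDiff ℝ 2 χ)
    (hχsupp : Function.support χ ⊆ Set.Icc (-1) 1)
    (hχone : ∀ x ∈ Set.Icc (-(1:ℝ)/2) (1/2), χ x = 1) :
    (∀ x y : ℝ,
      IntegrableOn
        (fun l : ℝ => (χ l : ℂ) * FplusD (l * |x|) * (FplusD (l * |y|) - FminusD (l * |y|)))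
        (Set.Ioi 0)) ∧
    ∃ C > 0, ∀ x y : ℝ,
      ‖k01 χ x y - g4minus x y‖ ≤ C * (1 + (|x| - |y|) ^ 2)⁻¹ := by
  have hχ1 : ∀ t, 1 < t → χ t = 0 := fun t ht =>
    Function.notMem_support.mp fun h => (hχsupp h).2.not_gt ht
  have hχ0 : χ =ᶠ[𝓝 0] fun _ => 1 :=
    eventually_of_mem (Icc_mem_nhds (by norm_num) (by norm_num)) hχone
  obtain ⟨C, hC, hbound⟩ :=
    exists_norm_integral_kernelIntegrand_sub_g4minusProfile_le hχ hχ0 zero_le_one hχ1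
  refine ⟨fun x y => integrableOn_kernelIntegrand hχ.continuous hχ1 |x| |y|, C, hC, fun x y => ?_⟩
  rw [k01, g4minus_eq, ← mul_sub, norm_mul, norm_mul]
  refine le_trans ?_ (hbound _ _ (abs_nonneg x) (abs_nonneg y))
  exact mul_le_of_le_one_left (norm_nonneg _)
    (mul_le_one₀ (norm_real_sign_le_one x) (norm_nonneg _) (norm_real_sign_le_one y))

/-- The asymptotic formula `k⁰₁ = g₄⁻ + O(⟨|x|-|y|⟩⁻²)` used in the `H¹ → L¹` bound for
`T_{K⁰₁}`; the integral defining `k⁰₁` converges absolutely. -/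
theorem stmt16 (χ : ℝ → ℝ) (hχ : ContDiff ℝ 2 χ)
    (hχsupp : Function.support χ ⊆ Set.Icc (-1) 1)
    (hχone : ∀ x ∈ Set.Icc (-(1:ℝ)/2) (1/2), χ x = 1)
    (hχbd : ∀ x : ℝ, 0 ≤ χ x ∧ χ x ≤ 1) :
    (∀ x y : ℝ,
      IntegrableOn
        (fun l : ℝ => (χ l : ℂ) * FplusD (l * |x|) * (FplusD (l * |y|) - FminusD (l * |y|)))
        (Set.Ioi 0)) ∧
    ∃ C > 0, ∀ x y : ℝ,
      ‖k01 χ x y - g4minus x y‖ ≤ C * (1 + (|x| - |y|) ^ 2)⁻¹ :=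
  stmt16_general χ hχ hχsupp hχone
end

section
/- Let ψ : ℝ → ℝ be defined by ψ(x) = 1/cosh(x) and V : ℝ → ℝ by V(x) = 20/cosh²(x) − 24/cosh⁴(x). Then ψ belongs to L²(ℝ), and for every x ∈ ℝ the fourth derivative of ψ satisfies ψ⁗(x) + V(x)·ψ(x) = ψ(x). -/
/-!
Differentiating `c / cosh x ^ n` and `c * sinh x / cosh x ^ (n + 1)` and eliminating `sinh²` through
`sinh² = cosh² - 1` keeps every derivative of `ψ = 1 / cosh` inside the span of these two families;
four steps give `ψ'''' = ψ - 20 ψ³ + 24 ψ⁵ = ψ - V ψ`. Square integrability follows from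
`cosh² = 1 + sinh² ≥ 1 + x²`, which dominates `ψ²` by the integrable `(1 + x²)⁻¹`.
-/

open MeasureTheory Real

theorem one_add_sq_le_cosh_sq (x : ℝ) : 1 + x ^ 2 ≤ cosh x ^ 2 := by
  have h : |x| ≤ |sinh x| := by
    rw [abs_sinh]
    exact self_le_sinh_iff.2 (abs_nonneg x)
  rw [cosh_sq]
  linarith [sq_le_sq.2 h]

theorem integrable_inv_cosh_sq : Integrable fun x : ℝ => (cosh x ^ 2)⁻¹ := by
  refine integrable_inv_one_add_sq.mono' (by fun_prop) (Filter.Eventually.of_forall fun x => ?_)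
  rw [norm_inv, norm_pow, norm_of_nonneg (cosh_pos x).le]
  exact inv_anti₀ (by positivity) (one_add_sq_le_cosh_sq x)

theorem memLp_two_one_div_cosh : MemLp (fun x : ℝ => 1 / cosh x) 2 volume := by
  have hcont : Continuous fun x : ℝ => 1 / cosh x :=
    continuous_const.div continuous_cosh fun x => (cosh_pos x).ne'
  refine (memLp_two_iff_integrable_sq hcont.aestronglyMeasurable).2 ?_
  simpa [div_pow] using integrable_inv_cosh_sq

theorem hasDerivAt_div_cosh_pow (c : ℝ) (n : ℕ) (x : ℝ) :
    HasDerivAt (fun x => c / cosh x ^ n) (-(c * n) * sinh x / cosh x ^ (n + 1)) x := by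
  have h := (hasDerivAt_const x c).div ((hasDerivAt_cosh x).pow n)
    (pow_ne_zero n (cosh_pos x).ne')
  refine h.congr_deriv ?_
  have := (cosh_pos x).ne'
  rcases n with _ | n
  · simp
  · simp only [Pi.pow_apply, Nat.add_sub_cancel]
    field_simp
    push_cast
    ring

theorem hasDerivAt_sinh_div_cosh_pow (c : ℝ) (n : ℕ) (x : ℝ) :
    HasDerivAt (fun x => c * sinh x / cosh x ^ (n + 1))
      (c * (n + 1) / cosh x ^ (n + 2) - c * n / cosh x ^ n) x := by
  have h := ((hasDerivAt_sinh x).const_mul c).div ((hasDerivAt_cosh x).pow (n + 1))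
    (pow_ne_zero _ (cosh_pos x).ne')
  refine h.congr_deriv ?_
  have := (cosh_pos x).ne'
  simp only [Pi.pow_apply, Nat.add_sub_cancel]
  field_simp
  push_cast
  linear_combination c * (n + 1) * cosh x ^ n * cosh x ^ n * cosh x ^ (n + 2) * cosh_sq x

theorem iteratedDeriv_succ_eq_of_hasDerivAt {f g g' : ℝ → ℝ} {n : ℕ}
    (hn : iteratedDeriv n f = g) (hg : ∀ x, HasDerivAt g (g' x) x) :
    iteratedDeriv (n + 1) f = g' := by
  rw [iteratedDeriv_succ, hn, deriv_eq hg]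

theorem iteratedDeriv_four_one_div_cosh :
    iteratedDeriv 4 (fun x => 1 / cosh x) =
      fun x => 1 / cosh x - 20 / cosh x ^ 3 + 24 / cosh x ^ 5 := by
  have d1 : iteratedDeriv 1 (fun x => 1 / cosh x) = fun x => -(sinh x / cosh x ^ 2) :=
    iteratedDeriv_succ_eq_of_hasDerivAt iteratedDeriv_zero fun x => by
      simpa [neg_div] using hasDerivAt_div_cosh_pow 1 1 x
  have d2 : iteratedDeriv 2 (fun x => 1 / cosh x) = fun x => 1 / cosh x - 2 / cosh x ^ 3 :=
    iteratedDeriv_succ_eq_of_hasDerivAt d1 fun x => by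
      simpa using (hasDerivAt_sinh_div_cosh_pow 1 1 x).fun_neg.congr_deriv
        (g' := 1 / cosh x - 2 / cosh x ^ 3) (by ring)
  have d3 : iteratedDeriv 3 (fun x => 1 / cosh x) =
      fun x => -(sinh x / cosh x ^ 2) + 6 * sinh x / cosh x ^ 4 :=
    iteratedDeriv_succ_eq_of_hasDerivAt d2 fun x => by
      simpa using ((hasDerivAt_div_cosh_pow 1 1 x).fun_sub
        (hasDerivAt_div_cosh_pow 2 3 x)).congr_deriv
          (g' := -(sinh x / cosh x ^ 2) + 6 * sinh x / cosh x ^ 4) (by ring)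
  exact iteratedDeriv_succ_eq_of_hasDerivAt d3 fun x => by
    simpa using ((hasDerivAt_sinh_div_cosh_pow 1 1 x).fun_neg.fun_add
      (hasDerivAt_sinh_div_cosh_pow 6 3 x)).congr_deriv
        (g' := 1 / cosh x - 20 / cosh x ^ 3 + 24 / cosh x ^ 5) (by ring)

/-- The explicit embedded-eigenvalue example: `ψ = 1/cosh ∈ L²(ℝ)` and
`ψ'''' + V ψ = ψ` for `V(x) = 20/cosh²x - 24/cosh⁴x`. -/
theorem stmt19 (ψ : ℝ → ℝ) (hψ : ψ = fun x => 1 / Real.cosh x)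
    (V : ℝ → ℝ) (hV : V = fun x => 20 / Real.cosh x ^ 2 - 24 / Real.cosh x ^ 4) :
    MemLp ψ 2 (volume : Measure ℝ) ∧
    ∀ x : ℝ, iteratedDeriv 4 ψ x + V x * ψ x = ψ x := by
  subst hψ hV
  refine ⟨memLp_two_one_div_cosh, fun x => ?_⟩
  rw [iteratedDeriv_four_one_div_cosh]
  have := (cosh_pos x).ne'
  field_simp
  ring
end
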